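/- arXiv:2302.00955 — 15 statements merged into one kernel-verified Lean document; each statement's English description precedes it below -/
import Mathlib

section
/- Let A be a Noetherian local ring with residue field k, E an injective hull of k over A, and suppose A is complete. If f : A → B is a finite ring extension that is pure (i.e., universally injective), then f is split: there exists an A-linear map r : B → A with r ∘ f = id. -/
open TensorProduct Function

set_option maxHeartbeats 1000000 in
set_option synthInstance.maxHeartbeats 200000 in
/-- **Purity implies splitting for finite extensions of complete Noetherian local rings.**
If `A` is a complete Noetherian local ring and `A → B` is a finite ring extension which is
pure (universally injective: for every `A`-module `C`, the map `C → B ⊗[A] C`, `c ↦ 1 ⊗ c`,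
is injective), then the extension is split: there is an `A`-linear retraction `r : B → A`
with `r ∘ f = id`. -/
theorem statement0 {A B : Type} [CommRing A] [IsNoetherianRing A] [IsLocalRing A]
    [IsAdicComplete (IsLocalRing.maximalIdeal A) A]
    [CommRing B] [Algebra A B] [Module.Finite A B]
    (hpure : ∀ (C : Type) [AddCommGroup C] [Module A C],
      Function.Injective (fun c : C => (1 : B) ⊗ₜ[A] c)) :
    ∃ r : B →ₗ[A] A, ∀ a : A, r (algebraMap A B a) = a := by
  classical
  obtain ⟨n, π, hπ⟩ := Module.Finite.exists_fin' A B
  obtain ⟨m, k, hk⟩ := Submodule.fg_iff_exists_fin_generating_family.mp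
    (IsNoetherian.noetherian (LinearMap.ker π))
  obtain ⟨v, hv⟩ := hπ 1
  set L : Fin (m + 1) → Fin n → A := Fin.snoc k v with hLdef
  -- the linear map given by the matrix `L`
  let g : (Fin n → A) →ₗ[A] (Fin (m + 1) → A) :=
    { toFun := fun x i => ∑ j, L i j * x j
      map_add' := by
        intro x y; funext i
        simp [Pi.add_apply, mul_add, Finset.sum_add_distrib]
      map_smul' := by
        intro a x; funext i
        simp [Finset.mul_sum, mul_left_comm] }
  have hg : ∀ x i, g x i = ∑ j, L i j * x j := fun _ _ => rfl
  let C := (Fin (m + 1) → A) ⧸ LinearMap.range g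
  let c : Fin (m + 1) → A := Pi.single (Fin.last m) 1
  -- π applied to `L i` for each row
  have hπL : ∀ i, π (L i) = algebraMap A B (c i) := by
    intro i
    refine Fin.lastCases ?_ ?_ i
    · simp [hLdef, hv, c]
    · intro i'
      have hki : k i' ∈ LinearMap.ker π := by
        rw [← hk]; exact Submodule.subset_span ⟨i', rfl⟩
      have hz : π (k i') = 0 := hki
      simp [hLdef, hz, c, Pi.single_apply, (Fin.castSucc_lt_last i').ne]
  -- rewrite π x as a combination of the images of basis vectors
  have hπx : ∀ x : Fin n → A, π x = ∑ j, x j • π (Pi.single j 1) := by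
    intro x
    conv_lhs => rw [← Finset.univ_sum_single x, map_sum]
    refine Finset.sum_congr rfl fun j _ => ?_
    rw [← map_smul]
    congr 1
    rw [← Pi.single_smul, smul_eq_mul, mul_one]
  -- the key identity upstairs in B ⊗ (Fin (m+1) → A)
  have key : (1 : B) ⊗ₜ[A] c
      = ∑ j, (π (Pi.single j 1)) ⊗ₜ[A] (g (Pi.single j 1)) := by
    apply (TensorProduct.piRight A A B (fun _ : Fin (m + 1) => A)).injective
    simp only [TensorProduct.piRight_apply, map_sum, TensorProduct.piRightHom_tmul]
    funext i
    simp only [Finset.sum_apply]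
    apply (TensorProduct.rid A B).injective
    simp only [map_sum, TensorProduct.rid_tmul]
    have h1 : ∑ j, (g (Pi.single j 1)) i • π (Pi.single j 1) = π (L i) := by
      rw [hπx (L i)]
      refine Finset.sum_congr rfl fun j _ => ?_
      congr 1
      simp [hg, Pi.single_apply, mul_ite]
    rw [h1, hπL i, Algebra.algebraMap_eq_smul_one]
  -- push the identity down to B ⊗ C
  have down : (1 : B) ⊗ₜ[A] (Submodule.Quotient.mk c : C) = 0 := by
    have h2 := congrArg (LinearMap.lTensor B (LinearMap.range g).mkQ) key
    simp only [LinearMap.lTensor_tmul, map_sum, Submodule.mkQ_apply] at h2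
    rw [h2]
    refine Finset.sum_eq_zero fun j _ => ?_
    rw [(Submodule.Quotient.mk_eq_zero _).mpr (LinearMap.mem_range_self g (Pi.single j 1)),
      TensorProduct.tmul_zero]
  -- purity: c lies in the range of g
  have hc : (Submodule.Quotient.mk c : C) = 0 := by
    apply hpure C
    simpa using down
  rw [Submodule.Quotient.mk_eq_zero] at hc
  obtain ⟨x, hx⟩ := hc
  -- the functional φ y = ∑ y j * x j
  let φ : (Fin n → A) →ₗ[A] A :=
    { toFun := fun y => ∑ j, y j * x j
      map_add' := by
        intro y z; simp [add_mul, Finset.sum_add_distrib]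
      map_smul' := by
        intro a y; simp [Finset.mul_sum, mul_assoc] }
  have hφ : ∀ y, φ y = ∑ j, y j * x j := fun _ => rfl
  have hle : LinearMap.ker π ≤ LinearMap.ker φ := by
    rw [← hk, Submodule.span_le]
    rintro _ ⟨i', rfl⟩
    have h3 : φ (k i') = g x (Fin.castSucc i') := by
      rw [hφ, hg]
      refine Finset.sum_congr rfl fun j _ => ?_
      simp [hLdef]
    simp only [SetLike.mem_coe, LinearMap.mem_ker, h3, hx]
    simp [c, Pi.single_apply, (Fin.castSucc_lt_last i').ne]
  let e := π.quotKerEquivOfSurjective hπ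
  refine ⟨((LinearMap.ker π).liftQ φ hle).comp e.symm.toLinearMap, fun a => ?_⟩
  have he : ∀ y : Fin n → A, e (Submodule.Quotient.mk y) = π y := fun _ => rfl
  have hesymm : e.symm (algebraMap A B a) = Submodule.Quotient.mk (a • v) := by
    apply e.injective
    rw [e.apply_symm_apply, he, map_smul, hv, Algebra.algebraMap_eq_smul_one]
  have hφv : φ v = 1 := by
    have h4 : φ v = g x (Fin.last m) := by
      rw [hφ, hg]
      refine Finset.sum_congr rfl fun j _ => ?_
      simp [hLdef]
    rw [h4, hx]
    simp [c]
  simp [LinearMap.comp_apply, hesymm, Submodule.liftQ_apply, map_smul, hφv,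
    smul_eq_mul]
end

section
/- Let A be an integrally closed domain containing ℚ. Then every finite injective ring extension A → B is split as a map of A-modules. -/
/-!
Let `K` be the fraction field of `A` and `L = K ⊗[A] B`, a finite `K`-algebra which is nonzero
because `K` is flat over `A` and `A → B` is injective. The trace of `L/K` sends an element of `B`
to a sum of eigenvalues that are integral over `A`, hence into `A` as `A` is integrally closed,
and it multiplies `A` by `[L : K]`. Since `ℚ ⊆ A`, dividing by `[L : K]` gives the retraction.
-/

open Polynomial TensorProduct Module

theorem Matrix.isIntegral_trace {A K n : Type*} [CommRing A] [Field K] [Algebra A K]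
    [Fintype n] [DecidableEq n] {M : Matrix n n K} (hM : IsIntegral A M) :
    IsIntegral A M.trace := by
  obtain ⟨p, hp, hpM⟩ := hM
  let Ω := AlgebraicClosure K
  have hpM' : aeval (M.map (algebraMap K Ω)) p = 0 := by
    rw [← aeval_def] at hpM
    simpa [hpM] using aeval_algHom_apply (IsScalarTower.toAlgHom A K Ω).mapMatrix M p
  rw [← isIntegral_algebraMap_iff (algebraMap K Ω).injective, AddMonoidHom.map_trace,
    trace_eq_sum_roots_charpoly]
  refine IsIntegral.multiset_sum fun μ hμ => ⟨p, hp, ?_⟩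
  -- `μ` is an eigenvalue, so `p(μ)` lies in the spectrum of `p(M) = 0`.
  have hμ : μ ∈ spectrum Ω (M.map (algebraMap K Ω)) :=
    mem_spectrum_iff_isRoot_charpoly.mpr (isRoot_of_mem_roots hμ)
  cases subsingleton_or_nontrivial (Matrix n n Ω)
  · simp [spectrum.of_subsingleton] at hμ
  have := spectrum.subset_polynomial_aeval _ (p.map (algebraMap A Ω)) ⟨μ, hμ, rfl⟩
  rw [aeval_map_algebraMap, hpM', spectrum.zero_eq] at this
  simpa [eval_map_algebraMap, aeval_def] using this

theorem Algebra.isIntegral_trace_of_finiteDimensional {A K L : Type*} [CommRing A] [Field K]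
    [CommRing L] [Algebra A K] [Algebra K L] [Algebra A L] [IsScalarTower A K L]
    [FiniteDimensional K L] {x : L} (hx : IsIntegral A x) :
    IsIntegral A (Algebra.trace K L x) := by
  classical
  let b := Module.Free.chooseBasis K L
  rw [Algebra.trace_eq_matrix_trace b]
  exact Matrix.isIntegral_trace (hx.map ((Algebra.leftMulMatrix b).restrictScalars A))

section baseChangeTrace

variable (A K B : Type*) [CommRing A] [Field K] [Algebra A K] [CommRing B] [Algebra A B]

noncomputable def baseChangeTrace : B →ₗ[A] K :=
  (Algebra.trace K (K ⊗[A] B)).restrictScalars A ∘ₗ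
    Algebra.TensorProduct.includeRight.toLinearMap

variable {A K B}

theorem baseChangeTrace_algebraMap (a : A) :
    baseChangeTrace A K B (algebraMap A B a) = finrank K (K ⊗[A] B) • algebraMap A K a := by
  rw [baseChangeTrace, LinearMap.comp_apply, AlgHom.toLinearMap_apply, AlgHom.commutes,
    LinearMap.restrictScalars_apply, IsScalarTower.algebraMap_apply A K, Algebra.trace_algebraMap]

variable [Module.Finite A B]

theorem isIntegral_baseChangeTrace (b : B) : IsIntegral A (baseChangeTrace A K B b) :=
  Algebra.isIntegral_trace_of_finiteDimensional
    ((IsIntegral.of_finite A b).map Algebra.TensorProduct.includeRight)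

theorem finrank_baseChange_pos [IsFractionRing A K] (hinj : Function.Injective (algebraMap A B)) :
    0 < finrank K (K ⊗[A] B) := by
  have : Flat A K := IsLocalization.flat K (nonZeroDivisors A)
  have : Nontrivial (K ⊗[A] B) :=
    (Algebra.TensorProduct.includeLeft_injective (S := K) hinj).nontrivial
  exact finrank_pos

variable (A K B) [IsFractionRing A K] [IsIntegrallyClosed A]

noncomputable def integralTrace : B →ₗ[A] A :=
  (IsIntegralClosure.equiv A (integralClosure A K) K A).toLinearMap ∘ₗ
    (baseChangeTrace A K B).codRestrict (Subalgebra.toSubmodule (integralClosure A K))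
      isIntegral_baseChangeTrace

variable {A K B}

theorem algebraMap_integralTrace (b : B) :
    algebraMap A K (integralTrace A K B b) = baseChangeTrace A K B b :=
  IsIntegralClosure.algebraMap_equiv A (integralClosure A K) K A _

theorem integralTrace_algebraMap (a : A) :
    integralTrace A K B (algebraMap A B a) = finrank K (K ⊗[A] B) • a := by
  apply IsFractionRing.injective A K
  rw [algebraMap_integralTrace, baseChangeTrace_algebraMap, map_nsmul]

end baseChangeTrace

/-- **Finite extensions of integrally closed ℚ-algebras are split.**
If `A` is an integrally closed domain containing `ℚ`, then every finite injective ring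
extension `A → B` admits an `A`-linear retraction `r : B → A` with `r(f(a)) = a`. -/
theorem statement1 {A B : Type} [CommRing A] [IsDomain A] [Algebra ℚ A]
    [IsIntegrallyClosed A] [CommRing B] [Algebra A B] [Module.Finite A B]
    (hinj : Function.Injective (algebraMap A B)) :
    ∃ r : B →ₗ[A] A, ∀ a : A, r (algebraMap A B a) = a := by
  let K := FractionRing A
  have hn : (finrank K (K ⊗[A] B) : ℚ) ≠ 0 := by
    exact_mod_cast (finrank_baseChange_pos hinj).ne'
  refine ⟨(finrank K (K ⊗[A] B) : ℚ)⁻¹ • integralTrace A K B, fun a => ?_⟩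
  rw [LinearMap.smul_apply, integralTrace_algebraMap, ← Nat.cast_smul_eq_nsmul ℚ, smul_smul,
    inv_mul_cancel₀ hn, one_smul]
end

section
/- Let A be a ring, M an A-module, and (x₁, …, xₙ) a regular sequence on M. If m₁, …, mₙ ∈ M satisfy x₁m₁ + ⋯ + xₙmₙ = 0, then each mᵢ lies in (x₁, …, xₙ)M. -/
/-! Induction on the length `k` of the relation: from `x₁m₁ + ⋯ + x_{k+1}m_{k+1} = 0` we get
`x_{k+1}m_{k+1} ∈ (x₁, …, x_k)M`, so regularity gives `m_{k+1} = x₁u₁ + ⋯ + x_k u_k`. Substituting,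
the `m_i + x_{k+1}u_i` satisfy a relation of length `k`, hence lie in `(x₁, …, x_k)M` by induction,
and so the `m_i` lie in `(x₁, …, x_{k+1})M`. -/

/-- The submodule `(x₁, …, x_k)·M` generated by the first `k` elements of the sequence. -/
def seqSMul {A : Type} [CommRing A] {n : ℕ} (x : Fin n → A)
    (M : Type) [AddCommGroup M] [Module A M] (k : ℕ) : Submodule A M :=
  Ideal.span {a : A | ∃ j : Fin n, (j : ℕ) < k ∧ x j = a} • (⊤ : Submodule A M)

/-- `(x₁, …, xₙ)` is a regular sequence on `M`: `M/(x₁,…,xₙ)M ≠ 0` and multiplication by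
`x_{i+1}` is injective on `M/(x₁,…,x_i)M` for each `0 ≤ i < n`. -/
def IsRegSeq {A : Type} [CommRing A] {n : ℕ} (x : Fin n → A)
    (M : Type) [AddCommGroup M] [Module A M] : Prop :=
  seqSMul x M n ≠ ⊤ ∧
    ∀ i : Fin n, ∀ m : M, x i • m ∈ seqSMul x M i → m ∈ seqSMul x M i

theorem Fin.sum_filter_val_lt_succ {M : Type*} [AddCommMonoid M] {n k : ℕ} (hk : k < n)
    (f : Fin n → M) :
    ∑ i : Fin n with i.val < k + 1, f i = ∑ i : Fin n with i.val < k, f i + f ⟨k, hk⟩ := by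
  have hsplit : Finset.univ.filter (fun i : Fin n ↦ i.val < k + 1) =
      insert ⟨k, hk⟩ (Finset.univ.filter fun i : Fin n ↦ i.val < k) := by
    ext i
    simp only [Finset.mem_filter, Finset.mem_univ, true_and, Finset.mem_insert, Fin.ext_iff]
    omega
  rw [hsplit, Finset.sum_insert (by simp), add_comm]

section

variable {A : Type} [CommRing A] {n : ℕ} {x : Fin n → A} {M : Type} [AddCommGroup M] [Module A M]

theorem seqSMul_mono : Monotone (seqSMul x M) := fun _ _ hkk' ↦
  Submodule.smul_mono_left <| Ideal.span_mono fun _ ⟨j, hj, hxj⟩ ↦ ⟨j, hj.trans_le hkk', hxj⟩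

theorem smul_mem_seqSMul {k : ℕ} {i : Fin n} (hi : (i : ℕ) < k) (w : M) :
    x i • w ∈ seqSMul x M k :=
  Submodule.smul_mem_smul (Ideal.subset_span ⟨i, hi, rfl⟩) Submodule.mem_top

theorem mem_seqSMul_iff_exists_sum {k : ℕ} {v : M} :
    v ∈ seqSMul x M k ↔ ∃ u : Fin n → M, ∑ i : Fin n with i.val < k, x i • u i = v := by
  constructor
  · intro hv
    let φ : (Fin n → M) →ₗ[A] M := ∑ i : Fin n with i.val < k, x i • LinearMap.proj i
    have hφ (u : Fin n → M) : φ u = ∑ i : Fin n with i.val < k, x i • u i := by simp [φ]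
    suffices seqSMul x M k ≤ LinearMap.range φ by
      obtain ⟨u, rfl⟩ := this hv
      exact ⟨u, (hφ u).symm⟩
    rw [seqSMul, Submodule.span_smul_eq]
    refine Submodule.set_smul_le _ _ _ fun _ w ⟨j, hj, hxj⟩ _ ↦ ⟨Pi.single j w, ?_⟩
    rw [hφ, Finset.sum_eq_single_of_mem j (by simpa using hj), Pi.single_eq_same, hxj]
    intro i _ hij
    rw [Pi.single_eq_of_ne hij, smul_zero]
  · rintro ⟨u, rfl⟩
    exact Submodule.sum_mem _ fun i hi ↦ smul_mem_seqSMul (Finset.mem_filter.mp hi).2 (u i)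

theorem mem_seqSMul_of_sum_smul_eq_zero
    (hreg : ∀ i : Fin n, ∀ m : M, x i • m ∈ seqSMul x M i → m ∈ seqSMul x M i)
    {k : ℕ} (hk : k ≤ n) {m : Fin n → M} (hrel : ∑ i : Fin n with i.val < k, x i • m i = 0)
    {i : Fin n} (hi : (i : ℕ) < k) : m i ∈ seqSMul x M k := by
  induction k generalizing m with
  | zero => exact absurd hi (Nat.not_lt_zero _)
  | succ k ih =>
    set j : Fin n := ⟨k, hk⟩
    rw [Fin.sum_filter_val_lt_succ hk] at hrel
    have hmj : m j ∈ seqSMul x M k := by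
      refine hreg j (m j) ?_
      rw [eq_neg_of_add_eq_zero_right hrel]
      exact neg_mem (mem_seqSMul_iff_exists_sum.mpr ⟨m, rfl⟩)
    obtain ⟨u, hu⟩ := mem_seqSMul_iff_exists_sum.mp hmj
    rcases Nat.lt_succ_iff_lt_or_eq.mp hi with hik | rfl
    · have hrel' : ∑ i : Fin n with i.val < k, x i • (m i + x j • u i) = 0 := by
        simp only [smul_add, Finset.sum_add_distrib, smul_comm (x _) (x j), ← Finset.smul_sum, hu]
        exact hrel
      have hmi := seqSMul_mono (Nat.le_succ k) (ih (Nat.le_of_succ_le hk) hrel' hik)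
      simpa using sub_mem hmi (smul_mem_seqSMul (i := j) (Nat.lt_succ_self k) (u i))
    · exact seqSMul_mono (Nat.le_succ _) hmj

end

/-- **Relations against a regular sequence lie in the ideal.**
If `(x₁, …, xₙ)` is a regular sequence on `M` and `x₁m₁ + ⋯ + xₙmₙ = 0`, then each `mᵢ`
belongs to `(x₁, …, xₙ)M`. -/
theorem statement3 {A : Type} [CommRing A] {n : ℕ} (x : Fin n → A)
    (M : Type) [AddCommGroup M] [Module A M] (hreg : IsRegSeq x M)
    (m : Fin n → M) (hrel : ∑ i, x i • m i = 0) :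
    ∀ i : Fin n, m i ∈ seqSMul x M n := by
  have hrel' : ∑ i : Fin n with i.val < n, x i • m i = 0 := by
    rwa [Finset.filter_true_of_mem fun i _ ↦ i.isLt]
  exact fun i ↦ mem_seqSMul_of_sum_smul_eq_zero hreg.2 le_rfl hrel' i.isLt
end

section
/- Let A be a ring, M an A-module, (x₁,…,xₙ) a regular sequence on M, and a₁,…,aₙ nonnegative integers. If m, m₁, …, mₙ ∈ M satisfy x₁^{a₁}⋯xₙ^{aₙ}·m = x₁^{a₁+1}m₁ + ⋯ + xₙ^{aₙ+1}mₙ, then m ∈ (x₁,…,xₙ)M. In particular x₁^{a₁}⋯xₙ^{aₙ} ∉ (x₁^{a₁+1},…,xₙ^{aₙ+1}) in A when (x₁,…,xₙ) is a regular sequence on A. -/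
open Finset

section InJ
variable {A : Type} [CommRing A] {n : ℕ} {M : Type} [AddCommGroup M] [Module A M]

/-- membership in the submodule generated by `{y i • m | i ∈ S}`, explicit form. -/
def InJ (y : Fin n → A) (S : Finset (Fin n)) (m : M) : Prop :=
  ∃ c : Fin n → M, ∑ i ∈ S, y i • c i = m

/-- the first `k` indices -/
def Sk (n k : ℕ) : Finset (Fin n) := univ.filter (fun j => (j : ℕ) < k)

lemma mem_Sk {k : ℕ} {i : Fin n} : i ∈ Sk n k ↔ (i : ℕ) < k := by
  simp [Sk]

lemma Sk_succ {j : ℕ} (hj : j < n) : Sk n (j+1) = insert ⟨j, hj⟩ (Sk n j) := by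
  ext i
  simp only [mem_Sk, mem_insert]
  constructor
  · intro h
    rcases Nat.lt_succ_iff_lt_or_eq.mp h with h | h
    · exact Or.inr h
    · exact Or.inl (Fin.ext h)
  · rintro (rfl | h)
    · exact Nat.lt_succ_self _
    · exact Nat.lt_succ_of_lt h

lemma Sk_succ_ge {j : ℕ} (hj : n ≤ j) : Sk n (j+1) = Sk n j := by
  ext i; simp only [mem_Sk]
  constructor
  · intro _; exact lt_of_lt_of_le i.isLt hj
  · intro h; exact Nat.lt_succ_of_lt h

lemma Sk_univ : Sk n n = univ := by
  ext i; simp [mem_Sk, i.isLt]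

lemma notMem_Sk_self {k : ℕ} (hk : k < n) : (⟨k, hk⟩ : Fin n) ∉ Sk n k := by
  simp [mem_Sk]

lemma InJ_zero (y : Fin n → A) (S : Finset (Fin n)) : InJ y S (0 : M) :=
  ⟨0, by simp⟩

lemma InJ_add {y : Fin n → A} {S : Finset (Fin n)} {m m' : M}
    (h : InJ y S m) (h' : InJ y S m') : InJ y S (m + m') := by
  obtain ⟨c, rfl⟩ := h; obtain ⟨c', rfl⟩ := h'
  exact ⟨c + c', by simp [smul_add, Finset.sum_add_distrib]⟩

lemma InJ_smul {y : Fin n → A} {S : Finset (Fin n)} {m : M} (r : A)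
    (h : InJ y S m) : InJ y S (r • m) := by
  obtain ⟨c, rfl⟩ := h
  refine ⟨fun i => r • c i, ?_⟩
  rw [Finset.smul_sum]
  exact Finset.sum_congr rfl fun i _ => (smul_comm r (y i) (c i)).symm

lemma InJ_neg {y : Fin n → A} {S : Finset (Fin n)} {m : M}
    (h : InJ y S m) : InJ y S (-m) := by
  have := InJ_smul (-1 : A) h; simpa using this

lemma InJ_sub {y : Fin n → A} {S : Finset (Fin n)} {m m' : M}
    (h : InJ y S m) (h' : InJ y S m') : InJ y S (m - m') := by
  rw [sub_eq_add_neg]; exact InJ_add h (InJ_neg h')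

lemma InJ_single {y : Fin n → A} {S : Finset (Fin n)} {i : Fin n} (hi : i ∈ S) (m : M) :
    InJ y S (y i • m) := by
  refine ⟨fun j => if j = i then m else 0, ?_⟩
  rw [Finset.sum_eq_single i]
  · simp
  · intro b _ hb; simp [hb]
  · intro h; exact absurd hi h

lemma InJ_mono {y : Fin n → A} {S T : Finset (Fin n)} (hST : S ⊆ T) {m : M}
    (h : InJ y S m) : InJ y T m := by
  obtain ⟨c, rfl⟩ := h
  refine ⟨fun i => if i ∈ S then c i else 0, ?_⟩
  rw [← Finset.sum_subset hST (by intro i _ hi; simp [hi])]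
  exact Finset.sum_congr rfl fun i hi => by simp [hi]

lemma InJ_congr {y z : Fin n → A} {S : Finset (Fin n)} (hyz : ∀ i ∈ S, y i = z i) {m : M}
    (h : InJ y S m) : InJ z S m := by
  obtain ⟨c, rfl⟩ := h
  exact ⟨c, Finset.sum_congr rfl fun i hi => by rw [hyz i hi]⟩

lemma InJ_split {y : Fin n → A} {S : Finset (Fin n)} {i : Fin n} (hi : i ∈ S) {m : M}
    (h : InJ y S m) : ∃ u r, InJ y (S.erase i) r ∧ m = y i • u + r := by
  obtain ⟨c, rfl⟩ := h
  refine ⟨c i, ∑ j ∈ S.erase i, y j • c j, ⟨c, rfl⟩, ?_⟩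
  rw [← Finset.add_sum_erase _ _ hi]

lemma InJ_combine {y : Fin n → A} {S : Finset (Fin n)} {i : Fin n} (hi : i ∈ S)
    {r : M} (hr : InJ y (S.erase i) r) (u : M) : InJ y S (y i • u + r) :=
  InJ_add (InJ_single hi u) (InJ_mono (Finset.erase_subset _ _) hr)

end InJ
section Reg
variable {A : Type} [CommRing A] {n : ℕ} (M : Type) [AddCommGroup M] [Module A M]

/-- elementwise form of being a regular sequence (without the nontriviality condition) -/
def IsReg (y : Fin n → A) : Prop :=
  ∀ (i : Fin n) (m : M), InJ y (Sk n (i : ℕ)) (y i • m) → InJ y (Sk n (i : ℕ)) m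

variable {M}

/-- key cancellation: for a regular sequence, `y k` is a nonzerodivisor modulo the
submodule generated by the other elements among the first `j` (for `k < j`). -/
lemma InJ_cancel {y : Fin n → A} (hreg : IsReg M y) :
    ∀ (j : ℕ) (k : Fin n), (k : ℕ) < j → ∀ w : M,
      InJ y ((Sk n j).erase k) (y k • w) → InJ y ((Sk n j).erase k) w := by
  intro j
  induction j with
  | zero => intro k hk; omega
  | succ j ih =>
    intro k hk w hw
    by_cases hkj : (k : ℕ) = j
    · -- base case: the erased set is exactly `Sk n k`
      have hjn : j < n := hkj ▸ k.isLt
      have hk2 : (⟨j, hjn⟩ : Fin n) = k := Fin.ext (by simp [hkj])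
      have hset : (Sk n (j+1)).erase k = Sk n (k : ℕ) := by
        rw [Sk_succ hjn, hk2, Finset.erase_insert (hkj ▸ notMem_Sk_self hjn), hkj]
      rw [hset] at hw ⊢
      exact hreg k w hw
    · have hkj' : (k : ℕ) < j := by omega
      by_cases hjn : j < n
      · set J : Fin n := ⟨j, hjn⟩ with hJ
        have hne : k ≠ J := by intro h; apply hkj; rw [h]
        have hset : (Sk n (j+1)).erase k = insert J ((Sk n j).erase k) := by
          rw [Sk_succ hjn, Finset.erase_insert_of_ne hne.symm]
        rw [hset] at hw ⊢
        have hJnotmem : J ∉ (Sk n j).erase k :=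
          fun h => notMem_Sk_self hjn (Finset.mem_of_mem_erase h)
        obtain ⟨u, r, hr, hw2⟩ := InJ_split (Finset.mem_insert_self J _) hw
        rw [Finset.erase_insert hJnotmem] at hr
        -- y J • u = y k • w - r ∈ InJ y (Sk n j)
        have h1 : InJ y (Sk n j) (y J • u) := by
          have : y J • u = y k • w - r := by rw [hw2]; abel
          rw [this]; exact InJ_sub (InJ_single (mem_Sk.mpr hkj') w)
            (InJ_mono (Finset.erase_subset _ _) hr)
        have hu : InJ y (Sk n j) u := hreg J u h1
        obtain ⟨v, r', hr', hu2⟩ := InJ_split (mem_Sk.mpr hkj' : k ∈ Sk n j) hu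
        have h2 : InJ y ((Sk n j).erase k) (y k • (w - y J • v)) := by
          have : y k • (w - y J • v) = y J • r' + r := by
            rw [smul_sub, hw2, hu2, smul_add, smul_comm (y J) (y k) v]
            abel
          rw [this]
          exact InJ_add (InJ_smul _ hr') hr
        have h3 := ih k hkj' _ h2
        have : w = y J • v + (w - y J • v) := by abel
        rw [this]
        exact InJ_combine (Finset.mem_insert_self _ _)
          (by rwa [Finset.erase_insert hJnotmem]) v
      · have hjn' : n ≤ j := le_of_not_gt hjn
        rw [Sk_succ_ge hjn'] at hw ⊢
        exact ih k hkj' w hw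

lemma InJ_cancel_pow {y : Fin n → A} (hreg : IsReg M y) (j : ℕ) (k : Fin n)
    (hk : (k : ℕ) < j) (c : ℕ) (w : M)
    (hw : InJ y ((Sk n j).erase k) ((y k ^ c) • w)) :
    InJ y ((Sk n j).erase k) w := by
  induction c generalizing w with
  | zero => simpa using hw
  | succ c ih =>
    rw [pow_succ, mul_comm, mul_smul] at hw
    exact ih w (InJ_cancel hreg j k hk _ hw)

/-- cancel a power of `y k` modulo the first `k` elements -/
lemma reg_pow {y : Fin n → A} (hreg : IsReg M y) (k : Fin n) (t : ℕ) (m : M)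
    (h : InJ y (Sk n (k : ℕ)) ((y k ^ t) • m)) : InJ y (Sk n (k : ℕ)) m := by
  induction t generalizing m with
  | zero => simpa using h
  | succ t ih =>
    rw [pow_succ, mul_comm, mul_smul] at h
    exact ih m (hreg k _ h)

end Reg
section Pow
variable {A : Type} [CommRing A] {n : ℕ} {M : Type} [AddCommGroup M] [Module A M]

lemma InJ_update_pow_down {y : Fin n → A} (k : Fin n) (c : ℕ) {S : Finset (Fin n)} {w : M}
    (h : InJ (Function.update y k (y k ^ (c+1))) S w) :
    InJ (Function.update y k (y k ^ c)) S w := by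
  obtain ⟨c', rfl⟩ := h
  refine ⟨fun i => if i = k then y k • c' i else c' i, Finset.sum_congr rfl fun i _ => ?_⟩
  by_cases hik : i = k
  · subst hik
    simp only [Function.update_self, if_pos rfl, if_true]
    rw [smul_smul, ← pow_succ]
  · simp only [Function.update_of_ne hik, if_neg hik]

/-- replacing one element of a regular sequence by a positive power keeps it regular -/
lemma IsReg_update_pow {y : Fin n → A} (hreg : IsReg M y) (k : Fin n) (c : ℕ) (hc : 0 < c) :
    IsReg M (Function.update y k (y k ^ c)) := by
  induction c with
  | zero => omega
  | succ c ih =>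
    rcases Nat.eq_zero_or_pos c with rfl | hc'
    · rw [pow_one, Function.update_eq_self]; exact hreg
    have hY : IsReg M (Function.update y k (y k ^ c)) := ih hc'
    intro j m hm
    have e1 : ∀ i ∈ (Sk n (j : ℕ)).erase k, Function.update y k (y k ^ (c+1)) i = y i :=
      fun i hi => Function.update_of_ne (Finset.ne_of_mem_erase hi) _ _
    have e2 : ∀ i ∈ (Sk n (j : ℕ)).erase k, Function.update y k (y k ^ c) i = y i :=
      fun i hi => Function.update_of_ne (Finset.ne_of_mem_erase hi) _ _
    by_cases hjk : j = k
    · -- j = k : the prefix set avoids k, use iterated regularity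
      subst hjk
      have hnk : ∀ i ∈ Sk n (j : ℕ), Function.update y j (y j ^ (c+1)) i = y i := by
        intro i hi
        exact Function.update_of_ne (fun h => by simp [h, mem_Sk] at hi) _ _
      rw [Function.update_self] at hm
      have hm' : InJ y (Sk n (j : ℕ)) ((y j ^ (c+1)) • m) := InJ_congr hnk hm
      exact InJ_congr (fun i hi => (hnk i hi).symm) (reg_pow hreg j (c+1) m hm')
    by_cases hkj : (k : ℕ) < (j : ℕ)
    · -- main case
      have hkmem : k ∈ Sk n (j : ℕ) := mem_Sk.mpr hkj
      rw [Function.update_of_ne hjk] at hm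
      have hmY : InJ (Function.update y k (y k ^ c)) (Sk n (j : ℕ)) (y j • m) :=
        InJ_update_pow_down k c hm
      have hmm : InJ (Function.update y k (y k ^ c)) (Sk n (j : ℕ)) m := by
        have := hY j
        rw [Function.update_of_ne hjk] at this
        exact this m hmY
      obtain ⟨s, t, ht0, hm2⟩ := InJ_split hkmem hmm
      rw [Function.update_self] at hm2
      have ht : InJ y ((Sk n (j : ℕ)).erase k) t := InJ_congr e2 ht0
      obtain ⟨p, q, hq0, hm3⟩ := InJ_split hkmem hm
      rw [Function.update_self] at hm3
      have hq : InJ y ((Sk n (j : ℕ)).erase k) q := InJ_congr e1 hq0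
      have h1 : (y k ^ c) • (y j • s) = y j • m - y j • t := by
        rw [hm2, smul_add, smul_comm (y j) (y k ^ c) s]; abel
      have key : (y k ^ c) • (y j • s - y k • p) = q - y j • t := by
        rw [smul_sub, h1, smul_smul, ← pow_succ, hm3]; abel
      have hcan : InJ y ((Sk n (j : ℕ)).erase k) (y j • s - y k • p) := by
        refine InJ_cancel_pow hreg (j : ℕ) k hkj c _ ?_
        rw [key]
        exact InJ_sub hq (InJ_smul (y j) ht)
      have hjs : InJ y (Sk n (j : ℕ)) (y j • s) := by
        have : y j • s = y k • p + (y j • s - y k • p) := by abel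
        rw [this]
        exact InJ_combine hkmem hcan p
      have hs := hreg j s hjs
      obtain ⟨f, g, hg, hs2⟩ := InJ_split hkmem hs
      have hfin : m = (y k ^ (c+1)) • f + ((y k ^ c) • g + t) := by
        rw [hm2, hs2, smul_add, smul_smul, ← pow_succ]; abel
      rw [hfin]
      have hrest : InJ (Function.update y k (y k ^ (c+1))) ((Sk n (j : ℕ)).erase k)
          ((y k ^ c) • g + t) :=
        InJ_congr (fun i hi => (e1 i hi).symm)
          (InJ_add (InJ_smul _ hg) ht)
      have := InJ_combine hkmem hrest f
      rwa [Function.update_self] at this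
    · -- k not among the first j: the sequence is unchanged there
      have hnk : ∀ i ∈ Sk n (j : ℕ), Function.update y k (y k ^ (c+1)) i = y i := by
        intro i hi
        refine Function.update_of_ne (fun h => hkj ?_) _ _
        rw [← h]; exact mem_Sk.mp hi
      rw [Function.update_of_ne hjk] at hm
      exact InJ_congr (fun i hi => (hnk i hi).symm)
        (hreg j m (InJ_congr hnk hm))

end Pow
section Main
variable {A : Type} [CommRing A] {n : ℕ} {M : Type} [AddCommGroup M] [Module A M]

/-- the auxiliary sequences: the first `k` elements raised to the powers `a i + 1` -/
def Ya (x : Fin n → A) (a : Fin n → ℕ) (k : ℕ) : Fin n → A :=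
  fun i => if (i : ℕ) < k then x i ^ (a i + 1) else x i

lemma Ya_zero (x : Fin n → A) (a : Fin n → ℕ) : Ya x a 0 = x :=
  funext fun i => if_neg (Nat.not_lt_zero _)

lemma Ya_succ (x : Fin n → A) (a : Fin n → ℕ) {k : ℕ} (hk : k < n) :
    Ya x a (k+1) =
      Function.update (Ya x a k) ⟨k, hk⟩ ((Ya x a k ⟨k, hk⟩) ^ (a ⟨k, hk⟩ + 1)) := by
  funext i
  by_cases hik : i = (⟨k, hk⟩ : Fin n)
  · subst hik
    rw [Function.update_self]
    show (if k < k + 1 then _ else _) = _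
    rw [if_pos (Nat.lt_succ_self k)]
    show _ = (if k < k then _ else _) ^ _
    rw [if_neg (lt_irrefl k)]
  · rw [Function.update_of_ne hik]
    have hv : (i : ℕ) ≠ k := fun h => hik (Fin.ext h)
    show (if (i : ℕ) < k + 1 then _ else _) = (if (i : ℕ) < k then _ else _)
    by_cases h2 : (i : ℕ) < k
    · rw [if_pos (by omega), if_pos h2]
    · rw [if_neg (by omega), if_neg h2]

lemma Ya_succ_ge (x : Fin n → A) (a : Fin n → ℕ) {k : ℕ} (hk : n ≤ k) :
    Ya x a (k+1) = Ya x a k := by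
  funext i
  have h1 : (i : ℕ) < k := lt_of_lt_of_le i.isLt hk
  show (if (i : ℕ) < k + 1 then _ else _) = (if (i : ℕ) < k then _ else _)
  rw [if_pos (by omega), if_pos h1]

lemma IsReg_Ya {x : Fin n → A} (hreg : IsReg M x) (a : Fin n → ℕ) (k : ℕ) :
    IsReg M (Ya x a k) := by
  induction k with
  | zero => rw [Ya_zero]; exact hreg
  | succ k ih =>
    by_cases hk : k < n
    · rw [Ya_succ x a hk]
      exact IsReg_update_pow ih _ _ (Nat.succ_pos _)
    · rw [Ya_succ_ge x a (le_of_not_gt hk)]; exact ih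

lemma Ya_agree {x : Fin n → A} {a : Fin n → ℕ} {k : ℕ} {i : Fin n} (hik : (i : ℕ) ≠ k) :
    Ya x a (k+1) i = Ya x a k i := by
  show (if (i : ℕ) < k + 1 then _ else _) = (if (i : ℕ) < k then _ else _)
  by_cases h2 : (i : ℕ) < k
  · rw [if_pos (by omega), if_pos h2]
  · rw [if_neg (by omega), if_neg h2]

open Finset in
lemma main_induction {x : Fin n → A} (hreg : IsReg M x) (a : Fin n → ℕ) :
    ∀ (t k : ℕ), k + t = n → ∀ (m : M) (ms : Fin n → M),
      (∏ i ∈ (univ : Finset (Fin n)).filter (fun i : Fin n => k ≤ (i : ℕ)), x i ^ a i) • m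
          = ∑ i, x i ^ (a i + 1) • ms i →
      InJ (Ya x a k) univ m := by
  intro t
  induction t with
  | zero =>
    intro k hk m ms hm
    have hempty : (univ : Finset (Fin n)).filter (fun i : Fin n => k ≤ (i : ℕ)) = ∅ := by
      ext i; simp only [mem_filter, mem_univ, true_and, notMem_empty, iff_false]
      have := i.isLt; omega
    rw [hempty, Finset.prod_empty, one_smul] at hm
    refine ⟨ms, ?_⟩
    rw [hm]
    refine Finset.sum_congr rfl fun i _ => ?_
    have : Ya x a k i = x i ^ (a i + 1) := if_pos (by have := i.isLt; omega)
    rw [this]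
  | succ t ih =>
    intro k hk m ms hm
    have hkn : k < n := by omega
    set K : Fin n := ⟨k, hkn⟩ with hKdef
    have hfilter : univ.filter (fun i : Fin n => k ≤ (i : ℕ))
        = insert K (univ.filter (fun i : Fin n => k + 1 ≤ (i : ℕ))) := by
      ext i
      simp only [mem_filter, mem_univ, true_and, mem_insert]
      constructor
      · intro h
        rcases Nat.eq_or_lt_of_le h with h | h
        · exact Or.inl (Fin.ext h.symm)
        · exact Or.inr h
      · rintro (rfl | h)
        · exact le_refl _
        · omega
    have hKnot : K ∉ univ.filter (fun i : Fin n => k + 1 ≤ (i : ℕ)) := by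
      simp [hKdef]
    rw [hfilter, Finset.prod_insert hKnot, mul_comm, mul_smul] at hm
    have h1 := ih (k+1) (by omega) ((x K ^ a K) • m) ms hm
    obtain ⟨u, r, hr0, h2⟩ := InJ_split (Finset.mem_univ K) h1
    have hYK : Ya x a (k+1) K = x K ^ (a K + 1) := if_pos (Nat.lt_succ_self k)
    rw [hYK] at h2
    have hr : InJ (Ya x a k) (univ.erase K) r :=
      InJ_congr (fun i hi => Ya_agree (fun h => (Finset.ne_of_mem_erase hi) (Fin.ext h))) hr0
    have key : (x K ^ a K) • (m - x K • u) = r := by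
      rw [smul_sub, h2, smul_smul, ← pow_succ]; abel
    have hYkK : Ya x a k K = x K := if_neg (lt_irrefl k)
    have huniv : (univ : Finset (Fin n)) = Sk n n := Sk_univ.symm
    have hcan : InJ (Ya x a k) (univ.erase K) (m - x K • u) := by
      rw [huniv]
      refine InJ_cancel_pow (IsReg_Ya hreg a k) n K hkn (a K) _ ?_
      rw [hYkK, key, ← huniv]
      exact hr
    have hmeq : m = Ya x a k K • u + (m - x K • u) := by rw [hYkK]; abel
    rw [hmeq]
    exact InJ_combine (Finset.mem_univ K) hcan u

end Main
section Bridge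
variable {A : Type} [CommRing A] {n : ℕ} {M : Type} [AddCommGroup M] [Module A M]

lemma InJ_to_mem {x : Fin n → A} {k : ℕ} {m : M} (h : InJ x (Sk n k) m) :
    m ∈ seqSMul x M k := by
  obtain ⟨c, rfl⟩ := h
  refine Submodule.sum_mem _ fun i hi => ?_
  exact Submodule.smul_mem_smul (Ideal.subset_span ⟨i, mem_Sk.mp hi, rfl⟩) Submodule.mem_top

lemma mem_to_InJ {x : Fin n → A} {k : ℕ} {m : M} (h : m ∈ seqSMul x M k) :
    InJ x (Sk n k) m := by
  refine Submodule.smul_induction_on h (fun r hr t _ => ?_) (fun u v hu hv => InJ_add hu hv)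
  refine Submodule.span_induction (p := fun r _ => InJ x (Sk n k) (r • t)) ?_ ?_ ?_ ?_ hr
  · rintro r ⟨j, hj, rfl⟩
    exact InJ_single (mem_Sk.mpr hj) t
  · show InJ x (Sk n k) ((0 : A) • t)
    rw [zero_smul]; exact InJ_zero _ _
  · intro u v _ _ hu hv
    show InJ x (Sk n k) ((u + v) • t)
    rw [add_smul]; exact InJ_add hu hv
  · intro c u _ hu
    show InJ x (Sk n k) ((c • u) • t)
    rw [smul_eq_mul, mul_smul]; exact InJ_smul c hu

lemma IsRegSeq_to_IsReg {x : Fin n → A} (h : IsRegSeq x M) : IsReg M x :=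
  fun i m hm => mem_to_InJ (h.2 i m (InJ_to_mem hm))

end Bridge

open Finset in
theorem statement4Aux {A : Type} [CommRing A] {n : ℕ} (x : Fin n → A) (a : Fin n → ℕ) :
    (∀ (M : Type) [AddCommGroup M] [Module A M], IsRegSeq x M →
      ∀ (m : M) (ms : Fin n → M),
        (∏ i, x i ^ a i) • m = ∑ i, x i ^ (a i + 1) • ms i →
        m ∈ seqSMul x M n) ∧
    (IsRegSeq x A →
      (∏ i, x i ^ a i) ∉ Ideal.span (Set.range fun i => x i ^ (a i + 1))) := by
  have part1 : ∀ (M : Type) [AddCommGroup M] [Module A M], IsRegSeq x M →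
      ∀ (m : M) (ms : Fin n → M),
        (∏ i, x i ^ a i) • m = ∑ i, x i ^ (a i + 1) • ms i →
        m ∈ seqSMul x M n := by
    intro M _ _ hrs m ms hm
    have hreg : IsReg M x := IsRegSeq_to_IsReg hrs
    have hfull : (univ : Finset (Fin n)).filter (fun i : Fin n => 0 ≤ (i : ℕ)) = univ := by
      ext i; simp
    have h0 := main_induction hreg a n 0 (by omega) m ms
      (by rw [hfull]; exact hm)
    rw [Ya_zero] at h0
    rw [show (univ : Finset (Fin n)) = Sk n n from Sk_univ.symm] at h0
    exact InJ_to_mem h0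
  refine ⟨part1, ?_⟩
  intro hrs hmem
  have hmem' : (∏ i, x i ^ a i) ∈ Submodule.span A (Set.range fun i => x i ^ (a i + 1)) := hmem
  rw [Submodule.mem_span_range_iff_exists_fun] at hmem'
  obtain ⟨c, hc⟩ := hmem'
  have h1 : (1 : A) ∈ seqSMul x A n := by
    refine part1 A hrs 1 c ?_
    rw [smul_eq_mul, mul_one, ← hc]
    refine Finset.sum_congr rfl fun i _ => ?_
    rw [smul_eq_mul, smul_eq_mul, mul_comm]
  apply hrs.1
  rw [Submodule.eq_top_iff']
  intro z
  have := Submodule.smul_mem (seqSMul x A n) z h1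
  rwa [smul_eq_mul, mul_one] at this



/-- **Monomial relations against a regular sequence.**
If `(x₁,…,xₙ)` is regular on `M` and
`x₁^{a₁}⋯xₙ^{aₙ}·m = x₁^{a₁+1}m₁ + ⋯ + xₙ^{aₙ+1}mₙ`, then `m ∈ (x₁,…,xₙ)M`.
In particular (taking `M = A`), `x₁^{a₁}⋯xₙ^{aₙ} ∉ (x₁^{a₁+1},…,xₙ^{aₙ+1})` when
`(x₁,…,xₙ)` is a regular sequence on `A`. -/
theorem statement4 {A : Type} [CommRing A] {n : ℕ} (x : Fin n → A) (a : Fin n → ℕ) :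
    (∀ (M : Type) [AddCommGroup M] [Module A M], IsRegSeq x M →
      ∀ (m : M) (ms : Fin n → M),
        (∏ i, x i ^ a i) • m = ∑ i, x i ^ (a i + 1) • ms i →
        m ∈ seqSMul x M n) ∧
    (IsRegSeq x A →
      (∏ i, x i ^ a i) ∉ Ideal.span (Set.range fun i => x i ^ (a i + 1))) := by
  exact statement4Aux x a
end

section
/- Let A be a ring, M an A-module, and x₁,…,xₙ ∈ A with positive integers e₁,…,eₙ. The sequence (x₁,…,xₙ) is regular on M if and only if the sequence (x₁^{e₁},…,xₙ^{eₙ}) is regular on M. -/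
section Helpers
variable {A : Type} [CommRing A] {M : Type} [AddCommGroup M] [Module A M]

/-- `(r)·M` -/
def spS (r : A) (M : Type) [AddCommGroup M] [Module A M] : Submodule A M :=
  Ideal.span {r} • (⊤ : Submodule A M)

lemma smul_mem_spS (r : A) (u : M) : r • u ∈ spS r M :=
  Submodule.smul_mem_smul (Ideal.subset_span rfl) trivial

lemma mem_sup_spS {N : Submodule A M} {r : A} {m : M} :
    m ∈ N ⊔ spS r M ↔ ∃ u : M, m - r • u ∈ N := by
  constructor
  · intro hm
    rcases Submodule.mem_sup.mp hm with ⟨n, hn, s, hs, rfl⟩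
    rw [spS, Submodule.ideal_span_singleton_smul] at hs
    rw [← SetLike.mem_coe, Submodule.coe_pointwise_smul] at hs
    rcases Set.mem_smul_set.mp hs with ⟨u, -, rfl⟩
    exact ⟨u, by simpa using hn⟩
  · rintro ⟨u, hu⟩
    have : m = (m - r • u) + r • u := by abel
    rw [this]
    exact Submodule.add_mem _ (Submodule.mem_sup_left hu)
      (Submodule.mem_sup_right (smul_mem_spS r u))

/-- `r` is a non-zerodivisor on `M/N`. -/
def regOn (N : Submodule A M) (r : A) : Prop := ∀ m : M, r • m ∈ N → m ∈ N

lemma regOn.of_mul_left {N : Submodule A M} {b c : A} (h : regOn N (b * c)) :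
    regOn N b := fun m hm => h m (by rw [mul_comm, mul_smul]; exact N.smul_mem c hm)

lemma regOn.of_mul_right {N : Submodule A M} {b c : A} (h : regOn N (b * c)) :
    regOn N c := (mul_comm b c ▸ h).of_mul_left

lemma regOn.mul {N : Submodule A M} {b c : A} (hb : regOn N b) (hc : regOn N c) :
    regOn N (b * c) := fun m hm => hc m (hb (c • m) (by rwa [← mul_smul]))

/-- swap fact: if `b` is reg on `M/N` and `z` reg on `M/(N+(b))` then `b` is reg on
`M/(N+(z))`. -/
lemma regOn.swap {N : Submodule A M} {b z : A} (hb : regOn N b)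
    (hz : regOn (N ⊔ spS b M) z) : regOn (N ⊔ spS z M) b := by
  intro m hm
  rcases mem_sup_spS.mp hm with ⟨u, hu⟩
  -- b•m - z•u ∈ N, so z•u ∈ N ⊔ (b)
  have h1 : z • u ∈ N ⊔ spS b M := by
    have : z • u = -(b • m - z • u) + b • m := by abel
    rw [this]
    exact Submodule.add_mem _ (Submodule.mem_sup_left (N.neg_mem hu))
      (Submodule.mem_sup_right (smul_mem_spS b m))
  rcases mem_sup_spS.mp (hz u h1) with ⟨v, hv⟩
  -- u - b•v ∈ N; then b•(m - z•v) = (b•m - z•u) + z•(u - b•v) ∈ N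
  have h2 : b • (m - z • v) ∈ N := by
    have : b • (m - z • v) = (b • m - z • u) + z • (u - b • v) := by
      simp only [smul_sub, smul_smul, mul_comm]; abel
    rw [this]
    exact N.add_mem hu (N.smul_mem z hv)
  exact mem_sup_spS.mpr ⟨v, hb _ h2⟩

end Helpers

section Core
variable {A : Type} [CommRing A] {M : Type} [AddCommGroup M] [Module A M]

lemma regOn.b_step {N : Submodule A M} {b c z : A} (h1 : regOn N (b * c))
    (h2 : regOn (N ⊔ spS (b * c) M) z) : regOn (N ⊔ spS b M) z := by
  intro m hm
  rcases mem_sup_spS.mp hm with ⟨u, hu⟩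
  have key : z • (c • m) ∈ N ⊔ spS (b * c) M := by
    refine mem_sup_spS.mpr ⟨u, ?_⟩
    have : z • c • m - (b * c) • u = c • (z • m - b • u) := by
      simp only [smul_sub, smul_smul]; ring_nf
    rw [this]; exact N.smul_mem c hu
  rcases mem_sup_spS.mp (h2 _ key) with ⟨v, hv⟩
  have : c • (m - b • v) ∈ N := by
    have h : c • (m - b • v) = c • m - (b * c) • v := by
      simp only [smul_sub, smul_smul]; ring_nf
    rw [h]; exact hv
  exact mem_sup_spS.mpr ⟨v, h1.of_mul_right _ this⟩

lemma regOn.a_step {N : Submodule A M} {b c z : A} (hb : regOn N b)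
    (hzb : regOn (N ⊔ spS b M) z) (hzc : regOn (N ⊔ spS c M) z) :
    regOn (N ⊔ spS (b * c) M) z := by
  intro m hm
  rcases mem_sup_spS.mp hm with ⟨u, hu⟩
  have hmb : m ∈ N ⊔ spS b M := by
    apply hzb
    refine mem_sup_spS.mpr ⟨c • u, ?_⟩
    have : z • m - b • c • u = z • m - (b * c) • u := by rw [mul_smul]
    rw [this]; exact hu
  rcases mem_sup_spS.mp hmb with ⟨w, hw⟩
  have hkey : b • (z • w - c • u) ∈ N := by
    have : b • (z • w - c • u) = -(z • (m - b • w)) + (z • m - (b * c) • u) := by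
      simp only [smul_sub, smul_smul]; ring_nf; abel
    rw [this]
    exact N.add_mem (N.neg_mem (N.smul_mem z hw)) hu
  have hzw : z • w ∈ N ⊔ spS c M :=
    mem_sup_spS.mpr ⟨u, hb _ hkey⟩
  rcases mem_sup_spS.mp (hzc _ hzw) with ⟨t, ht⟩
  refine mem_sup_spS.mpr ⟨t, ?_⟩
  have : m - (b * c) • t = (m - b • w) + b • (w - c • t) := by
    simp only [smul_sub, smul_smul]; abel
  rw [this]
  exact N.add_mem hw (N.smul_mem b ht)

/-- weak regularity of a list, relative to a starting submodule `N`. -/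
def W (N : Submodule A M) : List A → Prop
  | [] => True
  | r :: rs => regOn N r ∧ W (N ⊔ spS r M) rs

@[simp] lemma W_nil (N : Submodule A M) : W N ([] : List A) := trivial

@[simp] lemma W_cons (N : Submodule A M) (r : A) (rs : List A) :
    W N (r :: rs) ↔ regOn N r ∧ W (N ⊔ spS r M) rs := Iff.rfl

lemma W_of_mul : ∀ (rs : List A) (N : Submodule A M) (b c : A),
    W N ((b * c) :: rs) → W N (b :: rs) := by
  intro rs
  induction rs with
  | nil => exact fun N b c h => ⟨h.1.of_mul_left, trivial⟩
  | cons z ws IH =>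
    rintro N b c ⟨h1, h2, h3⟩
    refine ⟨h1.of_mul_left, h1.b_step h2, ?_⟩
    have h3' : W ((N ⊔ spS z M) ⊔ spS (b * c) M) ws := by
      rwa [sup_right_comm]
    have := IH (N ⊔ spS z M) b c ⟨h1.swap h2, h3'⟩
    rw [sup_right_comm]
    exact this.2

lemma W_mul : ∀ (rs : List A) (N : Submodule A M) (b c : A),
    W N (b :: rs) → W N (c :: rs) → W N ((b * c) :: rs) := by
  intro rs
  induction rs with
  | nil => exact fun N b c hb hc => ⟨hb.1.mul hc.1, trivial⟩
  | cons z ws IH =>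
    rintro N b c ⟨hb1, hb2, hb3⟩ ⟨hc1, hc2, hc3⟩
    refine ⟨hb1.mul hc1, hb1.a_step hb2 hc2, ?_⟩
    have hb' : W (N ⊔ spS z M) (b :: ws) :=
      ⟨hb1.swap hb2, by rwa [sup_right_comm] at hb3⟩
    have hc' : W (N ⊔ spS z M) (c :: ws) :=
      ⟨hc1.swap hc2, by rwa [sup_right_comm] at hc3⟩
    have := IH (N ⊔ spS z M) b c hb' hc'
    rw [sup_right_comm]
    exact this.2

lemma W_pow_head (rs : List A) (N : Submodule A M) (a : A) {e : ℕ} (he : 0 < e) :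
    W N ((a ^ e) :: rs) ↔ W N (a :: rs) := by
  induction e with
  | zero => omega
  | succ k IH =>
    rcases Nat.eq_zero_or_pos k with rfl | hk
    · rw [pow_one]
    · constructor
      · intro h
        have h' : W N ((a * a ^ k) :: rs) := by rwa [pow_succ, mul_comm] at h
        exact W_of_mul rs N a (a ^ k) h'
      · intro h
        have := W_mul rs N a (a ^ k) h ((IH hk).mpr h)
        rwa [← pow_succ'] at this

end Core

section Bridge
variable {A : Type} [CommRing A] {M : Type} [AddCommGroup M] [Module A M]

lemma W_pow_list : ∀ (l : List (A × ℕ)), (∀ p ∈ l, 0 < p.2) → ∀ N : Submodule A M,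
    (W N (l.map fun p => p.1 ^ p.2) ↔ W N (l.map Prod.fst)) := by
  intro l
  induction l with
  | nil => simp
  | cons p t IH =>
    intro hpos N
    simp only [List.map_cons]
    rw [W_pow_head _ _ _ (hpos p (.head _)), W_cons, W_cons]
    exact and_congr_right fun _ => IH (fun q hq => hpos q (.tail _ hq)) _

/-- `(elements of l)·M` -/
def spL (l : List A) (M : Type) [AddCommGroup M] [Module A M] : Submodule A M :=
  Ideal.span {a | a ∈ l} • (⊤ : Submodule A M)

lemma spL_nil : spL ([] : List A) M = ⊥ := by
  have : {a : A | a ∈ ([] : List A)} = ∅ := by simp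
  rw [spL, this, Ideal.span_empty, Submodule.bot_smul]

lemma spL_cons (r : A) (t : List A) : spL (r :: t) M = spS r M ⊔ spL t M := by
  have : {a : A | a ∈ r :: t} = insert r {a | a ∈ t} := by ext a; simp
  rw [spL, this, Ideal.span_insert, Submodule.sup_smul]; rfl

lemma W_iff_forall : ∀ (l : List A) (N : Submodule A M),
    W N l ↔ ∀ i (h : i < l.length), regOn (N ⊔ spL (l.take i) M) l[i] := by
  intro l
  induction l with
  | nil => simp
  | cons r t IH =>
    intro N
    have e0 : N ⊔ spL ((r :: t).take 0) M = N := by simp [spL_nil]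
    have es : ∀ j, N ⊔ spL ((r :: t).take (j + 1)) M
        = (N ⊔ spS r M) ⊔ spL (t.take j) M := by
      intro j
      rw [List.take_succ_cons, spL_cons, sup_assoc]
    constructor
    · rintro ⟨h1, h2⟩ i hi
      match i with
      | 0 => rw [e0]; exact h1
      | j + 1 =>
        have := (IH _).mp h2 j (by simpa using hi)
        rw [es j]
        simpa using this
    · intro h
      refine ⟨by have := h 0 (by simp); rwa [e0] at this, (IH _).mpr ?_⟩
      intro j hj
      have := h (j + 1) (by simpa using hj)
      rw [es j] at this
      simpa using this

end Bridge

section Final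
variable {A : Type} [CommRing A] {M : Type} [AddCommGroup M] [Module A M] {n : ℕ}

lemma seqSMul_eq (x : Fin n → A) (k : ℕ) :
    seqSMul x M k = spL ((List.ofFn x).take k) M := by
  rw [seqSMul, spL]
  congr 2
  ext a
  simp only [Set.mem_setOf_eq, List.mem_take_iff_getElem, List.getElem_ofFn,
    List.length_ofFn]
  constructor
  · rintro ⟨j, hj, rfl⟩
    exact ⟨j, lt_min hj j.isLt, by simp⟩
  · rintro ⟨i, hi, rfl⟩
    exact ⟨⟨i, (lt_min_iff.mp hi).2⟩, (lt_min_iff.mp hi).1, rfl⟩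

lemma isRegSeq_iff (x : Fin n → A) :
    IsRegSeq x M ↔ (seqSMul x M n ≠ ⊤ ∧ W (⊥ : Submodule A M) (List.ofFn x)) := by
  rw [IsRegSeq, W_iff_forall]
  refine and_congr Iff.rfl ?_
  constructor
  · intro h i hi
    have hi' : i < n := by simpa using hi
    intro m hm
    have e : (⊥ : Submodule A M) ⊔ spL ((List.ofFn x).take i) M = seqSMul x M i := by
      rw [bot_sup_eq, seqSMul_eq]
    have eg : (List.ofFn x)[i] = x ⟨i, hi'⟩ := by simp
    rw [e]
    rw [eg, e] at hm
    exact h ⟨i, hi'⟩ m hm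
  · intro h i m hm
    have hi : (i : ℕ) < (List.ofFn x).length := by simpa using i.isLt
    have e : (⊥ : Submodule A M) ⊔ spL ((List.ofFn x).take i) M = seqSMul x M i := by
      rw [bot_sup_eq, seqSMul_eq]
    have eg : (List.ofFn x)[(i : ℕ)] = x i := by simp
    have := h (i : ℕ) hi m (by rw [eg, e]; exact hm)
    rwa [e] at this

lemma smul_top_eq_top_iff {I J : Ideal A} (hJI : J ≤ I) (hIr : I ≤ J.radical)
    (hfg : I.FG) :
    I • (⊤ : Submodule A M) = ⊤ ↔ J • (⊤ : Submodule A M) = ⊤ := by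
  constructor
  · intro h
    obtain ⟨k, hk⟩ := Ideal.exists_pow_le_of_le_radical_of_fg hIr hfg
    have hpow : ∀ m : ℕ, (I ^ m) • (⊤ : Submodule A M) = ⊤ := by
      intro m
      induction m with
      | zero => rw [pow_zero, Ideal.one_eq_top, Submodule.top_smul]
      | succ m ih => rw [pow_succ, ← Ideal.smul_eq_mul, Submodule.smul_assoc, h, ih]
    have : (⊤ : Submodule A M) ≤ J • ⊤ := by
      conv_lhs => rw [← hpow k]
      exact Submodule.smul_mono_left hk
    exact top_le_iff.mp this
  · intro h
    refine top_le_iff.mp ?_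
    calc (⊤ : Submodule A M) = J • ⊤ := h.symm
      _ ≤ I • ⊤ := Submodule.smul_mono_left hJI

lemma seqSMul_top_iff (x : Fin n → A) (e : Fin n → ℕ) (he : ∀ i, 0 < e i) :
    (seqSMul x M n = ⊤ ↔ seqSMul (fun i => x i ^ e i) M n = ⊤) := by
  have hJI : Ideal.span {a : A | ∃ j : Fin n, (j : ℕ) < n ∧ x j ^ e j = a}
      ≤ Ideal.span {a : A | ∃ j : Fin n, (j : ℕ) < n ∧ x j = a} := by
    refine Ideal.span_le.mpr ?_
    rintro a ⟨j, hj, rfl⟩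
    have hmem : x j ∈ {a : A | ∃ j' : Fin n, (j' : ℕ) < n ∧ x j' = a} := ⟨j, j.isLt, rfl⟩
    exact Ideal.pow_mem_of_mem _ (Ideal.subset_span hmem) _ (he j)
  have hIr : Ideal.span {a : A | ∃ j : Fin n, (j : ℕ) < n ∧ x j = a}
      ≤ (Ideal.span {a : A | ∃ j : Fin n, (j : ℕ) < n ∧ x j ^ e j = a}).radical := by
    refine Ideal.span_le.mpr ?_
    rintro a ⟨j, hj, rfl⟩
    have hmem : x j ^ e j ∈ {a : A | ∃ j' : Fin n, (j' : ℕ) < n ∧ x j' ^ e j' = a} :=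
      ⟨j, j.isLt, rfl⟩
    exact Ideal.mem_radical_iff.mpr ⟨e j, Ideal.subset_span hmem⟩
  have hfg : (Ideal.span {a : A | ∃ j : Fin n, (j : ℕ) < n ∧ x j = a}).FG := by
    refine Submodule.fg_span (Set.Finite.subset (Set.finite_range x) ?_)
    rintro a ⟨j, -, rfl⟩
    exact ⟨j, rfl⟩
  exact smul_top_eq_top_iff hJI hIr hfg

end Final

/-- **Regularity of a sequence is invariant under taking powers.**
For positive integers `e₁,…,eₙ`, the sequence `(x₁,…,xₙ)` is regular on `M` if and only
if `(x₁^{e₁},…,xₙ^{eₙ})` is regular on `M`. -/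
theorem statement5 {A : Type} [CommRing A] {n : ℕ} (x : Fin n → A) (e : Fin n → ℕ)
    (he : ∀ i, 0 < e i) (M : Type) [AddCommGroup M] [Module A M] :
    IsRegSeq x M ↔ IsRegSeq (fun i => x i ^ e i) M := by
  rw [isRegSeq_iff, isRegSeq_iff]
  refine and_congr (not_congr (seqSMul_top_iff x e he)) ?_
  have h1 : List.ofFn (fun i => x i ^ e i)
      = (List.ofFn fun i => (x i, e i)).map (fun p => p.1 ^ p.2) := by
    rw [List.map_ofFn]; rfl
  have h2 : List.ofFn x = (List.ofFn fun i => (x i, e i)).map Prod.fst := by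
    rw [List.map_ofFn]; rfl
  rw [h1, h2]
  exact (W_pow_list _ (by
    intro p hp
    rw [List.mem_ofFn] at hp
    obtain ⟨i, rfl⟩ := hp
    exact he i) _).symm
end

section
/- Let R be a perfect ring of characteristic p and ξ ∈ W(R) a distinguished element (i.e. ξ = [ξ₀] + p·u with u a unit of W(R)). Then ξ is not a zero divisor in W(R). -/
section Aux

open WittVector

variable {p : ℕ} [hp : Fact p.Prime] {R : Type} [CommRing R] [CharP R p] [PerfectRing R p]

local notation "𝕎" => WittVector p R

private lemma versch_inj : Function.Injective (verschiebung : 𝕎 → 𝕎) := by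
  intro a b h
  ext n
  have := congrArg (fun z : 𝕎 => z.coeff (n + 1)) h
  simpa [WittVector.verschiebung_coeff_succ] using this

private lemma p_mul_eq (x : 𝕎) : (p : 𝕎) * x = verschiebung (frobenius x) := by
  rw [WittVector.verschiebung_frobenius]; ring

private lemma p_nzd {x : 𝕎} (h : (p : 𝕎) * x = 0) : x = 0 := by
  rw [p_mul_eq] at h
  have h2 : verschiebung (frobenius x) = verschiebung (frobenius (0 : 𝕎)) := by
    simpa using h
  exact (WittVector.frobenius_bijective p R).injective (versch_inj h2)

private lemma eq_p_mul_of_coeff_zero {a : 𝕎} (h : a.coeff 0 = 0) :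
    ∃ b : 𝕎, a = (p : 𝕎) * b := by
  refine ⟨(frobeniusEquiv p R).symm (WittVector.mk p fun n => a.coeff (n + 1)), ?_⟩
  rw [p_mul_eq]
  have hfe : frobenius ((frobeniusEquiv p R).symm (WittVector.mk p fun n => a.coeff (n + 1)))
      = WittVector.mk p fun n => a.coeff (n + 1) :=
    (frobeniusEquiv p R).apply_symm_apply _
  rw [hfe]
  ext n
  cases n with
  | zero => simpa [WittVector.verschiebung_coeff_zero] using h
  | succ k => rw [WittVector.verschiebung_coeff_succ]; rfl

private lemma exists_delta (a : 𝕎) : ∃ d : 𝕎, frobenius a = a ^ p + (p : 𝕎) * d := by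
  have h0 : (frobenius a - a ^ p).coeff 0 = 0 := by
    have h1 : (frobenius a - a ^ p).coeff 0
        = WittVector.constantCoeff (frobenius a - a ^ p) := rfl
    rw [h1, map_sub, map_pow]
    have : WittVector.constantCoeff (frobenius a) = a.coeff 0 ^ p := by
      simpa using WittVector.coeff_frobenius_charP a 0
    rw [this]
    simp [WittVector.constantCoeff_apply]
  obtain ⟨b, hb⟩ := eq_p_mul_of_coeff_zero h0
  exact ⟨b, by linear_combination hb⟩

private lemma frobenius_teich (r : R) :
    frobenius (teichmuller p r) = teichmuller p (r ^ p) := by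
  ext n
  cases n with
  | zero =>
      rw [WittVector.coeff_frobenius_charP, WittVector.teichmuller_coeff_zero,
        WittVector.teichmuller_coeff_zero]
  | succ k =>
      rw [WittVector.coeff_frobenius_charP]
      rw [WittVector.teichmuller_coeff_pos p r (k + 1) (Nat.succ_pos k),
        WittVector.teichmuller_coeff_pos p (r ^ p) (k + 1) (Nat.succ_pos k)]
      exact zero_pow hp.out.ne_zero

private lemma coeff_zero_of_mul_eq_zero (ξ : 𝕎) (ξ0 : R) (u : 𝕎) (hu : IsUnit u)
    (hξ : ξ = teichmuller p ξ0 + (p : 𝕎) * u) {x : 𝕎} (h : ξ * x = 0) :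
    x.coeff 0 = 0 := by
  set t : 𝕎 := teichmuller p ξ0 with ht
  -- p^2 ∣ ξ^p - t^p
  have hdvd : ((p : ℕ) : 𝕎) ^ 2 ∣ ξ ^ p - t ^ p := by
    have h1 : ((p : ℕ) : 𝕎) ∣ ξ - t := ⟨u, by rw [hξ]; ring⟩
    have := dvd_sub_pow_of_dvd_sub (p := p) (a := ξ) (b := t) h1 1
    simpa [pow_one] using this
  obtain ⟨w, hw⟩ := hdvd
  -- frobenius ξ = ξ^p + p * Dξ with Dξ ≡ frobenius u mod p
  have hFξ : frobenius ξ = ξ ^ p + (p : 𝕎) * (frobenius u - (p : 𝕎) * w) := by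
    have : frobenius ξ = t ^ p + (p : 𝕎) * frobenius u := by
      rw [hξ, map_add, map_mul, map_natCast, ht, frobenius_teich]
      rw [← map_pow (teichmuller p) ξ0 p]
    rw [this]
    linear_combination -hw
  set Dξ : 𝕎 := frobenius u - (p : 𝕎) * w with hDξ
  obtain ⟨Dx, hDx⟩ := exists_delta x
  -- apply frobenius to ξ * x = 0
  have hF : (ξ ^ p + (p : 𝕎) * Dξ) * (x ^ p + (p : 𝕎) * Dx) = 0 := by
    rw [← hFξ, ← hDx, ← map_mul, h, map_zero]
  have hxp : ξ ^ p * x ^ p = 0 := by rw [← mul_pow, h, zero_pow hp.out.ne_zero]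
  have hE : ξ ^ p * Dx + Dξ * x ^ p + (p : 𝕎) * (Dξ * Dx) = 0 := by
    apply p_nzd
    linear_combination hF - hxp
  -- pass to constant coefficients
  set c : 𝕎 →+* R := WittVector.constantCoeff with hc
  have hpc : (p : R) = 0 := CharP.cast_eq_zero R p
  have hE0 : c ξ ^ p * c Dx + c Dξ * c x ^ p = 0 := by
    have := congrArg c hE
    simpa [map_add, map_mul, map_pow, map_natCast, hpc] using this
  have h0 : c ξ * c x = 0 := by
    have := congrArg c h
    simpa [map_mul] using this
  have hDξu : IsUnit (c Dξ) := by
    have : c Dξ = c (frobenius u) := by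
      rw [hDξ, map_sub, map_mul, map_natCast, hpc]; ring
    rw [this]
    exact (hu.map (frobenius : 𝕎 →+* 𝕎)).map c
  have hx2p : c Dξ * (c x ^ p * c x ^ p) = 0 := by
    have : (c ξ * c x) ^ p * c Dx = 0 := by rw [h0, zero_pow hp.out.ne_zero, zero_mul]
    calc c Dξ * (c x ^ p * c x ^ p)
        = (c ξ ^ p * c Dx + c Dξ * c x ^ p) * c x ^ p - (c ξ * c x) ^ p * c Dx := by ring
      _ = 0 := by rw [hE0, this, zero_mul, sub_zero]
  have hx2p' : c x ^ p * c x ^ p = 0 := by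
    obtain ⟨v, hv⟩ := hDξu
    have := congrArg (fun z => (↑v⁻¹ : R) * z) hx2p
    simpa [← hv, ← mul_assoc] using this
  -- R is reduced since Frobenius is injective
  have hfrob : Function.Injective (_root_.frobenius R p) := injective_frobenius R p
  have hsq : c x * c x = 0 := by
    apply hfrob
    simp only [frobenius_def]
    rw [mul_pow, hx2p', zero_pow hp.out.ne_zero]
  have hcx : c x = 0 := by
    apply hfrob
    simp only [frobenius_def]
    have h2 : 2 ≤ p := hp.out.two_le
    obtain ⟨k, hk⟩ : ∃ k, p = k + 2 := ⟨p - 2, by omega⟩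
    have e0 : c x ^ p = c x ^ (k + 2) := congrArg (fun n => c x ^ n) hk
    have e1 : c x ^ p = c x ^ k * (c x * c x) := by rw [e0]; ring
    rw [e1, hsq, mul_zero, zero_pow hp.out.ne_zero]
  simpa [hc, WittVector.constantCoeff_apply] using hcx

end Aux

/-- **Distinguished elements are non-zerodivisors in Witt vectors.**
Let `R` be a perfect ring of characteristic `p` and `ξ ∈ W(R)` a distinguished element,
i.e. `ξ = [ξ₀] + p·u` with `u` a unit of `W(R)`. Then `ξ` is not a zero divisor. -/
theorem statement6 {p : ℕ} [Fact p.Prime] {R : Type} [CommRing R] [CharP R p]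
    [PerfectRing R p] (ξ : WittVector p R) (ξ0 : R) (u : WittVector p R) (hu : IsUnit u)
    (hξ : ξ = WittVector.teichmuller p ξ0 + p * u) :
    ∀ x : WittVector p R, ξ * x = 0 → x = 0 := by
  intro x hx
  -- every coefficient below n vanishes for p^n * y
  have coeff_pow : ∀ (n : ℕ) (y : WittVector p R) (i : ℕ), i < n →
      (((p : WittVector p R) ^ n) * y).coeff i = 0 := by
    intro n
    induction n with
    | zero => intro y i hi; omega
    | succ m ih =>
        intro y i hi
        have : ((p : WittVector p R) ^ (m + 1)) * y
            = (p : WittVector p R) * (((p : WittVector p R) ^ m) * y) := by ring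
        rw [this, p_mul_eq]
        cases i with
        | zero => exact WittVector.verschiebung_coeff_zero _
        | succ j =>
            rw [WittVector.verschiebung_coeff_succ, WittVector.coeff_frobenius_charP,
              ih y j (by omega), zero_pow (Nat.Prime.ne_zero Fact.out)]
  -- descent: x is divisible by arbitrary powers of p
  have key : ∀ n : ℕ, ∃ y : WittVector p R, x = (p : WittVector p R) ^ n * y ∧ ξ * y = 0 := by
    intro n
    induction n with
    | zero => exact ⟨x, by simp, hx⟩
    | succ m ih =>
        obtain ⟨y, hxy, hy⟩ := ih
        have h0 : y.coeff 0 = 0 := coeff_zero_of_mul_eq_zero ξ ξ0 u hu hξ hy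
        obtain ⟨b, hb⟩ := eq_p_mul_of_coeff_zero h0
        refine ⟨b, ?_, ?_⟩
        · rw [hxy, hb]; ring
        · apply p_nzd
          rw [show (p : WittVector p R) * (ξ * b) = ξ * ((p : WittVector p R) * b) by ring,
            ← hb, hy]
  ext n
  obtain ⟨y, hxy, -⟩ := key (n + 1)
  rw [hxy]
  simpa using coeff_pow (n + 1) y n (by omega)
end

section
/- Let R be a perfect ring of characteristic p. For x, y ∈ W(R), writing x = Σ [xₙ]pⁿ and y = Σ [yₙ]pⁿ, the product satisfies (xy)₁ = x₀·y₁ + y₀·x₁, i.e. the coefficient of p in the Teichmüller expansion of xy equals x(0)y'(0) + y(0)x'(0). -/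
open MvPolynomial

private lemma wittMul_one_eq (p : ℕ) [Fact p.Prime] :
    WittVector.wittMul p 1 =
      X (0, 0) ^ p * X (1, 1) + X (1, 0) ^ p * X (0, 1) +
        C (p : ℤ) * (X (0, 1) * X (1, 1)) := by
  have h := wittStructureInt_prop p (X 0 * X 1 : MvPolynomial (Fin 2) ℤ) 1
  rw [wittPolynomial_one] at h
  simp only [map_add, map_mul, map_pow, bind₁_X_right, bind₁_C_right, rename_X, rename_C,
    map_natCast] at h
  have h0 : WittVector.wittMul p 0 = X (0, 0) * X (1, 0) := WittVector.wittMul_zero p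
  have hp : (C (p : ℤ) : MvPolynomial (Fin 2 × ℕ) ℤ) ≠ 0 := by
    simp only [ne_eq, C_eq_zero]
    exact_mod_cast (Fact.out : p.Prime).ne_zero
  apply mul_left_cancel₀ hp
  have h' : C (p : ℤ) * WittVector.wittMul p 1 + (WittVector.wittMul p 0) ^ p =
      (C (p : ℤ) * X (0, 1) + X (0, 0) ^ p) * (C (p : ℤ) * X (1, 1) + X (1, 0) ^ p) := by
    simpa [WittVector.wittMul] using h
  rw [h0] at h'
  linear_combination h'

private lemma mul_coeff_one {p : ℕ} [Fact p.Prime] {R : Type} [CommRing R] [CharP R p]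
    (x y : WittVector p R) :
    (x * y).coeff 1 = x.coeff 0 ^ p * y.coeff 1 + y.coeff 0 ^ p * x.coeff 1 := by
  rw [WittVector.mul_coeff, WittVector.peval, wittMul_one_eq]
  have hp : ((p : ℤ) : R) = 0 := by
    simp [CharP.cast_eq_zero R p]
  simp [Function.uncurry, hp]

/-- **Derivative-at-0 product rule in Witt vectors.**
For a perfect ring `R` of characteristic `p`, every `x ∈ W(R)` has a unique Teichmüller
expansion `x = Σ [xₙ]pⁿ`; its coefficients are `x₀ = x.coeff 0` and
`x₁ = φ⁻¹(x.coeff 1)` where `φ` is the Frobenius of `R`.  The product satisfies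
`(xy)₁ = x₀·y₁ + y₀·x₁`. -/
theorem statement7 {p : ℕ} [Fact p.Prime] {R : Type} [CommRing R] [CharP R p]
    [PerfectRing R p] (x y : WittVector p R) :
    (frobeniusEquiv R p).symm ((x * y).coeff 1) =
      x.coeff 0 * (frobeniusEquiv R p).symm (y.coeff 1) +
        y.coeff 0 * (frobeniusEquiv R p).symm (x.coeff 1) := by
  rw [mul_coeff_one, map_add, map_mul, map_mul]
  have h : ∀ a : R, (frobeniusEquiv R p).symm (a ^ p) = a := by
    intro a
    have : (frobeniusEquiv R p) a = a ^ p := rfl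
    rw [← this, RingEquiv.symm_apply_apply]
  rw [h, h]
end

section
/- Let R be a perfect 𝔽_p-algebra and ξ ∈ W(R) distinguished. If x ∈ W(R) satisfies p² ∣ ξx in W(R), then p ∣ x. Consequently, the p-power torsion of the ring A = W(R)/(ξ) is killed by p (i.e. A[p²] = A[p]). -/
set_option linter.unusedSectionVars false

namespace WVaux

variable {p : ℕ} [Fact p.Prime] {R : Type} [CommRing R] [CharP R p] [PerfectRing R p]

lemma versch_inj : Function.Injective (WittVector.verschiebung : WittVector p R → WittVector p R) := by
  intro x y h
  ext n
  have := congrArg (fun w => WittVector.coeff w (n+1)) h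
  simpa [WittVector.verschiebung_coeff_succ] using this

lemma p_regular (x : WittVector p R) (h : (p : WittVector p R) * x = 0) : x = 0 := by
  rw [mul_comm, ← WittVector.verschiebung_frobenius] at h
  have h2 : WittVector.frobenius x = (0 : WittVector p R) := versch_inj (by simpa using h)
  exact (WittVector.frobenius_bijective p R).injective (by simpa using h2)

lemma p_dvd_iff (x : WittVector p R) : (p : WittVector p R) ∣ x ↔ x.coeff 0 = 0 := by
  constructor
  · rintro ⟨y, rfl⟩
    rw [mul_comm, ← WittVector.verschiebung_frobenius, WittVector.verschiebung_coeff_zero]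
  · intro h
    have hx : x = WittVector.verschiebung (x.shift 1) := by
      have := WittVector.eq_iterate_verschiebung (x := x) (n := 1) (by
        intro i hi; interval_cases i; exact h)
      simpa using this
    set y := (WittVector.frobeniusEquiv p R).symm (x.shift 1) with hy
    have hfy : WittVector.frobenius y = x.shift 1 :=
      (WittVector.frobeniusEquiv p R).apply_symm_apply _
    exact ⟨y, by rw [mul_comm, ← WittVector.verschiebung_frobenius, hfy]; exact hx⟩

lemma reduced_sq (p : ℕ) [Fact p.Prime] {R : Type} [CommRing R] [CharP R p] [PerfectRing R p]
    {r : R} (h : r ^ 2 = 0) : r = 0 := by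
  have hp2 : 2 ≤ p := (Fact.out : p.Prime).two_le
  have hpow : r ^ p = 0 := by
    have : r ^ p = r ^ 2 * r ^ (p - 2) := by rw [← pow_add]; congr 1; omega
    rw [this, h, zero_mul]
  apply injective_frobenius R p
  simp [frobenius_def, hpow, zero_pow (Fact.out : p.Prime).ne_zero]

end WVaux

/-- **`p²` divisibility against a distinguished element, and bounded `p`-torsion of
perfectoid rings.**  Let `R` be a perfect `𝔽_p`-algebra and `ξ ∈ W(R)` distinguished
(`ξ = [ξ₀] + p·u`, `u` a unit).  If `p² ∣ ξx` in `W(R)` then `p ∣ x`.  Consequently the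
`p`-power torsion of `A = W(R)/(ξ)` is killed by `p`. -/
theorem statement8 {p : ℕ} [Fact p.Prime] {R : Type} [CommRing R] [CharP R p]
    [PerfectRing R p] (ξ : WittVector p R) (ξ0 : R) (u : WittVector p R) (hu : IsUnit u)
    (hξ : ξ = WittVector.teichmuller p ξ0 + p * u) :
    (∀ x : WittVector p R, (p : WittVector p R) ^ 2 ∣ ξ * x → (p : WittVector p R) ∣ x) ∧
    (∀ a : WittVector p R ⧸ Ideal.span {ξ}, ∀ n : ℕ,
      (p : WittVector p R ⧸ Ideal.span {ξ}) ^ n * a = 0 →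
      (p : WittVector p R ⧸ Ideal.span {ξ}) * a = 0) := by
  have part1 : ∀ x : WittVector p R, (p : WittVector p R) ^ 2 ∣ ξ * x →
      (p : WittVector p R) ∣ x := by
    rintro x ⟨y, hxy⟩
    set x0 := x.coeff 0 with hx0def
    -- decompose x = [x0] + p z
    have hsub : (x - WittVector.teichmuller p x0).coeff 0 = 0 := by
      have := map_sub (WittVector.constantCoeff (p := p) (R := R)) x
        (WittVector.teichmuller p x0)
      simp only [WittVector.constantCoeff_apply, WittVector.teichmuller_coeff_zero] at this
      rw [this, sub_self]
    obtain ⟨z, hz⟩ := (WVaux.p_dvd_iff _).2 hsub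
    have hx : x = WittVector.teichmuller p x0 + (p : WittVector p R) * z := by
      linear_combination hz
    rw [hξ, hx] at hxy
    -- coefficient 0 of the main equation: ξ0 * x0 = 0
    have hξx0 : ξ0 * x0 = 0 := by
      have h := congrArg WittVector.constantCoeff hxy
      simp only [map_add, map_mul, map_pow, map_natCast, WittVector.constantCoeff_apply,
        WittVector.teichmuller_coeff_zero, CharP.cast_eq_zero, zero_mul, mul_zero, add_zero,
        zero_pow, zero_add, ne_eq, OfNat.ofNat_ne_zero, not_false_eq_true] at h
      linear_combination h
    -- divide the equation by p
    have heq : (p : WittVector p R) * (WittVector.teichmuller p ξ0 * z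
        + u * WittVector.teichmuller p x0 + (p : WittVector p R) * (u * z)
        - (p : WittVector p R) * y) = 0 := by
      have ht : WittVector.teichmuller p (ξ0 * x0) = 0 := by
        rw [hξx0, WittVector.teichmuller_zero]
      have ht' : WittVector.teichmuller p ξ0 * WittVector.teichmuller p x0 = 0 := by
        rw [← map_mul]; exact ht
      linear_combination hxy - ht'
    have hB := WVaux.p_regular _ heq
    -- coefficient 0 again: ξ0 * z0 + u0 * x0 = 0
    have hcoeff : ξ0 * z.coeff 0 + u.coeff 0 * x0 = 0 := by
      have h := congrArg WittVector.constantCoeff hB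
      simp only [map_add, map_sub, map_mul, map_natCast, WittVector.constantCoeff_apply,
        WittVector.teichmuller_coeff_zero, CharP.cast_eq_zero, zero_mul, mul_zero,
        sub_zero, add_zero, map_zero] at h
      linear_combination h
    have hu0 : IsUnit (u.coeff 0) := by
      have := hu.map (WittVector.constantCoeff (p := p) (R := R))
      simpa using this
    have hx0sq : u.coeff 0 * x0 ^ 2 = 0 := by
      linear_combination x0 * hcoeff - z.coeff 0 * hξx0
    have hx00 : x0 = 0 := WVaux.reduced_sq p (hu0.mul_right_eq_zero.mp hx0sq)
    exact ⟨z, by rw [hx, hx00, WittVector.teichmuller_zero, zero_add]⟩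
  refine ⟨part1, ?_⟩
  set A := WittVector p R ⧸ Ideal.span {ξ} with hA
  have key2 : ∀ a : A, (p : A) ^ 2 * a = 0 → (p : A) * a = 0 := by
    intro a ha
    obtain ⟨x, rfl⟩ := Ideal.Quotient.mk_surjective a
    have ha' : (Ideal.Quotient.mk (Ideal.span {ξ})) ((p : WittVector p R) ^ 2 * x) = 0 := by
      rw [map_mul, map_pow, map_natCast]; exact ha
    rw [Ideal.Quotient.eq_zero_iff_mem, Ideal.mem_span_singleton] at ha'
    obtain ⟨c, hc⟩ := ha'
    obtain ⟨d, hd⟩ := part1 c ⟨x, hc.symm⟩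
    have hpx : (p : WittVector p R) * ((p : WittVector p R) * x - ξ * d) = 0 := by
      linear_combination hc + ξ * hd
    have hfin := WVaux.p_regular _ hpx
    have : (Ideal.Quotient.mk (Ideal.span {ξ})) ((p : WittVector p R) * x) = 0 := by
      rw [Ideal.Quotient.eq_zero_iff_mem, Ideal.mem_span_singleton]
      exact ⟨d, by linear_combination hfin⟩
    rw [← map_natCast (Ideal.Quotient.mk (Ideal.span {ξ})) p, ← map_mul]
    exact this
  have desc : ∀ n : ℕ, ∀ a : A, (p : A) ^ (n + 1) * a = 0 → (p : A) * a = 0 := by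
    intro n
    induction n with
    | zero => intro a h; simpa using h
    | succ n ih =>
      intro a h
      refine ih a ?_
      have := key2 ((p : A) ^ n * a) (by rw [← h]; ring)
      linear_combination this
  intro a n h
  cases n with
  | zero => rw [pow_zero, one_mul] at h; rw [h, mul_zero]
  | succ n => exact desc n a h
end

section
/- Let B be a p-adically complete ring. The reduction-mod-p map induces a multiplicative bijection from lim_{x↦x^p} B (sequences (bₙ) in B with b_{n+1}^p = bₙ) onto the tilt B^♭ = lim_{x↦x^p} B/p. -/
/-- Sequences `(bₙ)` in `B` with `b_{n+1}^p = bₙ`, i.e. the limit `lim_{x ↦ x^p} B`. -/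
def PPowSeq (p : ℕ) (B : Type) [CommRing B] : Type :=
  { f : ℕ → B // ∀ n, (f (n + 1)) ^ p = f n }

/-- Pointwise multiplication on `lim_{x ↦ x^p} B`. -/
def PPowSeq.mul {p : ℕ} {B : Type} [CommRing B] (f g : PPowSeq p B) : PPowSeq p B :=
  ⟨fun n => f.1 n * g.1 n, fun n => by rw [mul_pow, f.2 n, g.2 n]⟩

/-- Componentwise reduction modulo `p`, a map `lim_{x ↦ x^p} B → B^♭ = lim_{x ↦ x^p} B/p`. -/
def tiltReduction (p : ℕ) (B : Type) [CommRing B] (f : PPowSeq p B) :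
    PPowSeq p (B ⧸ Ideal.span {(p : B)}) :=
  ⟨fun n => Ideal.Quotient.mk _ (f.1 n), fun n => by
    rw [← map_pow, f.2 n]⟩

/-!
The inverse of reduction mod `p` is the Teichmüller map: a compatible sequence `(xₙ)` in `B/p`
goes to `(lim_k bₙ₊ₖ ^ p ^ k)` for arbitrary lifts `bₙ₊ₖ` of `xₙ₊ₖ`; the limit exists because
`a ≡ b mod p` implies `a ^ p ^ k ≡ b ^ p ^ k mod p ^ (k + 1)`. Mathlib packages this as
`Perfection.quotientMulEquiv`, which needs `B/p` to have characteristic `p`. That fails only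
when `p` is a unit, and then `p`-adic completeness forces `B = 0`.
-/

open Ideal Perfection

theorem tiltReduction_mul {p : ℕ} {B : Type} [CommRing B] (f g : PPowSeq p B) :
    tiltReduction p B (f.mul g) = (tiltReduction p B f).mul (tiltReduction p B g) :=
  Subtype.ext <| funext fun _ => map_mul _ _ _

theorem subsingleton_of_isUnit_of_isAdicComplete {p : ℕ} {B : Type} [CommRing B]
    [IsAdicComplete (span {(p : B)}) B] (hp : IsUnit (p : B)) : Subsingleton B := by
  have h : IsAdicComplete (⊤ : Ideal B) B := span_singleton_eq_top.mpr hp ▸ ‹_›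
  exact h.subsingleton

theorem bijective_tiltReduction (p : ℕ) [Fact p.Prime] (B : Type) [CommRing B]
    [IsAdicComplete (span {(p : B)}) B] : Function.Bijective (tiltReduction p B) := by
  by_cases hp : IsUnit (p : B)
  · have := subsingleton_of_isUnit_of_isAdicComplete hp
    have : Subsingleton (PPowSeq p B) := ⟨fun _ _ => Subtype.ext <| Subsingleton.elim _ _⟩
    have : Subsingleton (PPowSeq p (B ⧸ span {(p : B)})) :=
      ⟨fun _ _ => Subtype.ext <| Subsingleton.elim _ _⟩
    have : Nonempty (PPowSeq p B) := ⟨(1 : Perfection B p)⟩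
    exact ⟨fun _ _ _ => Subsingleton.elim _ _, Function.surjective_to_subsingleton _⟩
  · have := CharP.quotient B p hp
    -- `PPowSeq p B` is `Perfection B p` by definition, and `tiltReduction` is the forward map.
    exact (quotientMulEquiv p (span {(p : B)})).bijective

/-- **Fontaine's multiplicative bijection for `p`-complete rings.**
If `B` is `p`-adically complete, reduction mod `p` induces a multiplicative bijection
from `lim_{x ↦ x^p} B` onto the tilt `B^♭ = lim_{x ↦ x^p} B/p`. -/
theorem statement9 (p : ℕ) [Fact p.Prime] (B : Type) [CommRing B]
    [IsAdicComplete (Ideal.span {(p : B)}) B] :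
    Function.Bijective (tiltReduction p B) ∧
      ∀ f g : PPowSeq p B,
        tiltReduction p B (f.mul g) = (tiltReduction p B f).mul (tiltReduction p B g) :=
  ⟨bijective_tiltReduction p B, tiltReduction_mul⟩
end

section
/- Let A be a subring of a ring B. Then the set of x ∈ B such that x^{pⁿ} ∈ A for some n ≥ 0 need not be a ring in general, but if A contains a non-zerodivisor π of B with B = A[1/π] and π^p ∣ p in A, then R = {x ∈ A[1/π] : ∃ n ≥ 0, x^{pⁿ} ∈ A} is a subring of A[1/π], and it is the smallest p-closed subring of A[1/π] containing A. -/
/-!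
Write `u` for the image of `π`, so that `u ∣ p` and every `x ∈ A[1/π]` has `u ^ k * x ∈ A` for some
`k`. If `x ^ pⁿ`, `y ^ pⁿ`, `u ^ k * x`, `u ^ k * y` lie in `A`, then `(x + y) ^ p ^ N ∈ A` for
`N = n + k pⁿ`: the binomial terms `x ^ i * y ^ j` with `pⁿ ∣ i` are products of `x ^ pⁿ` and `y ^ pⁿ`,
and in the others `vₚ(i) < n`, so `p ^ (k pⁿ)` divides `(p ^ N).choose i` and the resulting factor
`u ^ (k pⁿ)` absorbs the leftover `x ^ r * y ^ s` with `r + s = pⁿ`.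
-/

/-- The set of elements of `A[1/π]` some `pⁿ`-th power of which lies in (the image of) `A`. -/
def pPowerClosure (p : ℕ) {A : Type} [CommRing A] (π : A) : Set (Localization.Away π) :=
  {x | ∃ n : ℕ, x ^ p ^ n ∈ (algebraMap A (Localization.Away π)).range}

theorem Nat.Prime.pow_sub_add_one_dvd_choose {p n N i : ℕ} (hp : p.Prime) (hnN : n ≤ N)
    (hi : ¬ p ^ n ∣ i) : p ^ (N - n + 1) ∣ (p ^ N).choose i := by
  rcases lt_or_ge (p ^ N) i with hNi | hiN
  · rw [Nat.choose_eq_zero_of_lt hNi]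
    exact dvd_zero _
  have hi0 : i ≠ 0 := by rintro rfl; exact hi (dvd_zero _)
  have hvn : i.factorization p < n := by
    by_contra! h
    exact hi ((pow_dvd_pow p h).trans (Nat.ordProj_dvd i p))
  rw [hp.pow_dvd_iff_le_factorization (Nat.choose_pos hiN).ne',
    Nat.factorization_choose_prime_pow hp hiN hi0]
  omega

theorem Nat.exists_eq_mul_add_eq_mul_add_of_dvd_add {P i j : ℕ} (hij : P ∣ i + j) (hi : ¬ P ∣ i) :
    ∃ q r t s, i = P * q + r ∧ j = P * t + s ∧ r + s = P := by
  have hP : 0 < P := Nat.pos_of_ne_zero (by rintro rfl; simp_all)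
  refine ⟨i / P, i % P, j / P, j % P, (Nat.div_add_mod i P).symm, (Nat.div_add_mod j P).symm, ?_⟩
  have hr : i % P ≠ 0 := fun h => hi (Nat.dvd_of_mod_eq_zero h)
  have hrs : P ∣ i % P + j % P := by
    refine (Nat.dvd_add_right (dvd_mul_right P (i / P + j / P))).mp ?_
    convert hij using 1
    linarith [Nat.div_add_mod i P, Nat.div_add_mod j P]
  obtain ⟨w, hw⟩ := hrs
  have hrP := Nat.mod_lt i hP
  have hsP := Nat.mod_lt j hP
  rcases w with _ | _ | w
  · omega
  · omega
  · nlinarith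

namespace Subring

variable {L : Type*} [CommRing L] (R : Subring L)

theorem pow_mul_mem_of_le {u x : L} (hu : u ∈ R) {k l : ℕ} (hkl : k ≤ l) (hx : u ^ k * x ∈ R) :
    u ^ l * x ∈ R := by
  rw [← Nat.sub_add_cancel hkl, pow_add, mul_assoc]
  exact mul_mem (pow_mem hu _) hx

theorem pow_pow_mem_of_le {x : L} (p : ℕ) {n m : ℕ} (hnm : n ≤ m) (hx : x ^ p ^ n ∈ R) :
    x ^ p ^ m ∈ R := by
  obtain ⟨d, rfl⟩ := Nat.exists_eq_add_of_le hnm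
  rw [pow_add, pow_mul]
  exact pow_mem hx _

theorem pow_mul_pow_mul_mem {u x y : L} {k : ℕ} (hx : u ^ k * x ∈ R) (hy : u ^ k * y ∈ R)
    (r s : ℕ) : u ^ (k * (r + s)) * (x ^ r * y ^ s) ∈ R := by
  convert mul_mem (pow_mem hx r) (pow_mem hy s) using 1
  ring

theorem add_pow_mem {p : ℕ} (hp : p.Prime) {u c x y : L} (hc : c ∈ R) (hpc : (p : L) = u * c)
    {n k : ℕ} (hx : x ^ p ^ n ∈ R) (hy : y ^ p ^ n ∈ R) (hux : u ^ k * x ∈ R)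
    (huy : u ^ k * y ∈ R) : (x + y) ^ p ^ (n + k * p ^ n) ∈ R := by
  rw [add_pow]
  refine sum_mem fun i hiN => ?_
  have hpn : p ^ n ∣ i + (p ^ (n + k * p ^ n) - i) := by
    rw [Nat.add_sub_cancel' (Finset.mem_range_succ_iff.mp hiN)]
    exact pow_dvd_pow p (by omega)
  by_cases hpi : p ^ n ∣ i
  · obtain ⟨b, hb⟩ := (Nat.dvd_add_right hpi).mp hpn
    obtain ⟨a, ha⟩ := hpi
    rw [hb, ha, pow_mul, pow_mul]
    exact mul_mem (mul_mem (pow_mem hx a) (pow_mem hy b)) (natCast_mem R _)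
  obtain ⟨q, r, t, s, hi, hj, hrs⟩ := Nat.exists_eq_mul_add_eq_mul_add_of_dvd_add hpn hpi
  obtain ⟨d, hd⟩ : p ^ (k * p ^ n) ∣ (p ^ (n + k * p ^ n)).choose i :=
    (pow_dvd_pow p (by omega)).trans (hp.pow_sub_add_one_dvd_choose (by omega) hpi)
  have hterm : x ^ i * y ^ (p ^ (n + k * p ^ n) - i) * ((p ^ (n + k * p ^ n)).choose i : L) =
      (x ^ p ^ n) ^ q * (y ^ p ^ n) ^ t * c ^ (k * p ^ n) * d *
        (u ^ (k * (r + s)) * (x ^ r * y ^ s)) := by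
    rw [hd, hj, hi, hrs]
    push_cast
    rw [hpc]
    ring
  rw [hterm]
  exact mul_mem (mul_mem (mul_mem (mul_mem (pow_mem hx q) (pow_mem hy t)) (pow_mem hc _))
    (natCast_mem R d)) (pow_mul_pow_mul_mem R hux huy r s)

def pPowRoots (p : ℕ) : Set L := {x | ∃ n, x ^ p ^ n ∈ R}

variable (p : ℕ)

theorem subset_pPowRoots : (R : Set L) ⊆ R.pPowRoots p :=
  fun x hx => ⟨0, by rwa [pow_zero, pow_one]⟩

theorem mem_pPowRoots_of_pow_mem {x : L} (hx : x ^ p ∈ R.pPowRoots p) : x ∈ R.pPowRoots p := by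
  obtain ⟨n, hn⟩ := hx
  exact ⟨n + 1, by rwa [pow_succ', pow_mul]⟩

theorem pPowRoots_subset_of_le {T : Subring L} (hRT : R ≤ T) (hT : ∀ x, x ^ p ∈ T → x ∈ T) :
    R.pPowRoots p ⊆ T := by
  rintro x ⟨n, hn⟩
  induction n generalizing x with
  | zero => exact hRT (by rwa [pow_zero, pow_one] at hn)
  | succ n ih => exact hT x (ih (by rwa [pow_succ', pow_mul] at hn))

theorem mul_mem_pPowRoots {x y : L} (hx : x ∈ R.pPowRoots p) (hy : y ∈ R.pPowRoots p) :
    x * y ∈ R.pPowRoots p := by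
  obtain ⟨n, hn⟩ := hx
  obtain ⟨m, hm⟩ := hy
  refine ⟨max n m, ?_⟩
  rw [mul_pow]
  exact mul_mem (R.pow_pow_mem_of_le p (le_max_left n m) hn)
    (R.pow_pow_mem_of_le p (le_max_right n m) hm)

theorem neg_mem_pPowRoots {x : L} (hx : x ∈ R.pPowRoots p) : -x ∈ R.pPowRoots p := by
  obtain ⟨n, hn⟩ := hx
  exact ⟨n, by rw [neg_pow]; exact mul_mem (pow_mem (neg_mem (one_mem R)) _) hn⟩

theorem add_mem_pPowRoots {p : ℕ} (hp : p.Prime) {u c x y : L} (hu : u ∈ R) (hc : c ∈ R)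
    (hpc : (p : L) = u * c) (hx : x ∈ R.pPowRoots p) (hy : y ∈ R.pPowRoots p)
    (hux : ∃ k, u ^ k * x ∈ R) (huy : ∃ k, u ^ k * y ∈ R) : x + y ∈ R.pPowRoots p := by
  obtain ⟨n, hn⟩ := hx
  obtain ⟨m, hm⟩ := hy
  obtain ⟨k, hk⟩ := hux
  obtain ⟨l, hl⟩ := huy
  exact ⟨_, R.add_pow_mem hp hc hpc (R.pow_pow_mem_of_le p (le_max_left n m) hn)
    (R.pow_pow_mem_of_le p (le_max_right n m) hm) (R.pow_mul_mem_of_le hu (le_max_left k l) hk)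
    (R.pow_mul_mem_of_le hu (le_max_right k l) hl)⟩

def pPowRootsSubring {p : ℕ} (hp : p.Prime) {u c : L} (hu : u ∈ R) (hc : c ∈ R)
    (hpc : (p : L) = u * c) (hloc : ∀ x : L, ∃ k, u ^ k * x ∈ R) : Subring L where
  carrier := R.pPowRoots p
  one_mem' := R.subset_pPowRoots p R.one_mem
  zero_mem' := R.subset_pPowRoots p R.zero_mem
  mul_mem' := R.mul_mem_pPowRoots p
  neg_mem' := R.neg_mem_pPowRoots p
  add_mem' {x y} hx hy := R.add_mem_pPowRoots hp hu hc hpc hx hy (hloc x) (hloc y)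

end Subring

theorem statement10_general (p : ℕ) [Fact p.Prime] {A : Type} [CommRing A] (π : A)
    (hdvd : π ^ p ∣ (p : A)) :
    (∃ S : Subring (Localization.Away π), (S : Set (Localization.Away π)) =
        pPowerClosure p π) ∧
    Set.range (algebraMap A (Localization.Away π)) ⊆ pPowerClosure p π ∧
    (∀ x : Localization.Away π, x ^ p ∈ pPowerClosure p π → x ∈ pPowerClosure p π) ∧
    (∀ T : Subring (Localization.Away π),
      (∀ a : A, algebraMap A (Localization.Away π) a ∈ T) →
      (∀ x : Localization.Away π, x ^ p ∈ T → x ∈ T) →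
      pPowerClosure p π ⊆ T) := by
  have hp : p.Prime := Fact.out
  set φ := algebraMap A (Localization.Away π)
  obtain ⟨c, hc⟩ := (dvd_pow_self π hp.ne_zero).trans hdvd
  have hpc : (p : Localization.Away π) = φ π * φ c := by rw [← map_mul, ← hc, map_natCast]
  have hloc (x : Localization.Away π) : ∃ k, φ π ^ k * x ∈ φ.range := by
    obtain ⟨k, a, h⟩ := IsLocalization.Away.surj π x
    exact ⟨k, a, by rw [h.symm, mul_comm]⟩
  refine ⟨⟨φ.range.pPowRootsSubring hp ⟨π, rfl⟩ ⟨c, rfl⟩ hpc hloc, rfl⟩,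
    φ.range.subset_pPowRoots p, fun x => φ.range.mem_pPowRoots_of_pow_mem p,
    fun T hT hTp => φ.range.pPowRoots_subset_of_le p ?_ hTp⟩
  rintro _ ⟨a, rfl⟩
  exact hT a

/-- **The `p`-closure of `A` in `A[1/π]`.**
Let `A` contain a non-zerodivisor `π` with `π^p ∣ p`.  Then
`R = {x ∈ A[1/π] : ∃ n ≥ 0, x^{pⁿ} ∈ A}` is a subring of `A[1/π]`, it contains the image
of `A`, it is `p`-closed in `A[1/π]`, and it is the smallest `p`-closed subring of
`A[1/π]` containing `A`. -/
theorem statement10 (p : ℕ) [Fact p.Prime] {A : Type} [CommRing A] (π : A)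
    (hπ : ∀ a : A, π * a = 0 → a = 0) (hdvd : π ^ p ∣ (p : A)) :
    (∃ S : Subring (Localization.Away π), (S : Set (Localization.Away π)) =
        pPowerClosure p π) ∧
    Set.range (algebraMap A (Localization.Away π)) ⊆ pPowerClosure p π ∧
    (∀ x : Localization.Away π, x ^ p ∈ pPowerClosure p π → x ∈ pPowerClosure p π) ∧
    (∀ T : Subring (Localization.Away π),
      (∀ a : A, algebraMap A (Localization.Away π) a ∈ T) →
      (∀ x : Localization.Away π, x ^ p ∈ T → x ∈ T) →
      pPowerClosure p π ⊆ T) :=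
  statement10_general p π hdvd
end

section
/- Let A be a ring with a non-zerodivisor π such that π^p divides p. Then A is p-closed in A[1/π] if and only if the Frobenius map A/π → A/π^p, x ↦ x^p, is injective. -/
/-!
Both conditions are equivalent to "`π ^ p ∣ a ^ p` implies `π ∣ a`".
For Frobenius injectivity this is the case `y = 0`; conversely
`(x - y) ^ p ≡ x ^ p - y ^ p` modulo `p`, hence modulo `π ^ p`.
For `p`-closedness: if `π ^ p ∣ a ^ p` then `(a / π) ^ p ∈ A`, so closedness gives `π ∣ a`.
Conversely, write `x = a / π ^ (k + 1)` with `x ^ p ∈ A`: then `π ^ p ∣ a ^ p`, so `π ∣ a` and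
`k` drops by one.
-/

open nonZeroDivisors

theorem natCast_dvd_sub_pow_sub_sub_pow {A : Type*} [CommRing A] {p : ℕ} (hp : p.Prime)
    (x y : A) : (p : A) ∣ (x - y) ^ p - (x ^ p - y ^ p) := by
  obtain ⟨r, hr⟩ := exists_add_pow_prime_eq hp (x - y) y
  rw [sub_add_cancel] at hr
  exact ⟨-((x - y) * y * r), by linear_combination -hr⟩

theorem frobenius_injective_iff_of_pow_dvd {A : Type*} [CommRing A] {p : ℕ} (hp : p.Prime)
    {π : A} (hdvd : π ^ p ∣ (p : A)) :
    (∀ x y : A, π ^ p ∣ x ^ p - y ^ p → π ∣ x - y) ↔ ∀ a : A, π ^ p ∣ a ^ p → π ∣ a := by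
  refine ⟨fun H a ha ↦ ?_, fun H x y hxy ↦ H _ ?_⟩
  · simpa using H a 0 (by simpa [zero_pow hp.ne_zero] using ha)
  · simpa using dvd_add hxy (hdvd.trans (natCast_dvd_sub_pow_sub_sub_pow hp x y))

namespace IsLocalization.Away

variable {A S : Type*} [CommRing A] [CommRing S] [Algebra A S] {π : A} [IsLocalization.Away π S]

variable (S) in
theorem algebraMap_injective_of_mem_nonZeroDivisors (hπ : π ∈ A⁰) :
    Function.Injective (algebraMap A S) :=
  IsLocalization.injective S (Submonoid.powers_le.mpr hπ)

theorem pow_dvd_pow_of_mul_pow_succ_eq (hπ : π ∈ A⁰) {n k : ℕ} {z : S} {a b : A}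
    (hz : z ^ n = algebraMap A S b) (ha : z * algebraMap A S π ^ (k + 1) = algebraMap A S a) :
    π ^ n ∣ a ^ n := by
  refine ⟨b * π ^ (k * n), algebraMap_injective_of_mem_nonZeroDivisors S hπ ?_⟩
  simp only [map_pow, map_mul, ← ha, mul_pow, hz, ← pow_mul]
  ring

theorem range_pow_closed_iff (hπ : π ∈ A⁰) (n : ℕ) :
    (∀ x : S, x ^ n ∈ (algebraMap A S).range → x ∈ (algebraMap A S).range) ↔
      ∀ a : A, π ^ n ∣ a ^ n → π ∣ a := by
  have hunit : IsUnit (algebraMap A S π) := algebraMap_isUnit π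
  constructor
  · rintro H a ⟨b, hb⟩
    obtain ⟨c, hc⟩ := H (hunit.unit⁻¹ * algebraMap A S a) ⟨b, by
      rw [mul_pow, ← map_pow, hb, map_mul, map_pow, ← mul_assoc, ← mul_pow,
        hunit.val_inv_mul, one_pow, one_mul]⟩
    refine ⟨c, algebraMap_injective_of_mem_nonZeroDivisors S hπ ?_⟩
    rw [map_mul, hc, ← mul_assoc, hunit.mul_val_inv, one_mul]
  · rintro H x ⟨b, hb⟩
    obtain ⟨k, a, ha⟩ := surj π x
    induction k generalizing a with
    | zero => exact ⟨a, by simpa using ha.symm⟩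
    | succ k ih =>
      obtain ⟨c, rfl⟩ := H a (pow_dvd_pow_of_mul_pow_succ_eq hπ hb.symm ha)
      refine ih c (hunit.mul_right_cancel ?_)
      rw [mul_assoc, ← pow_succ, ha, map_mul, mul_comm]

end IsLocalization.Away

/-- **`p`-closedness is injectivity of Frobenius `A/π → A/π^p`.**
Let `π ∈ A` be a non-zerodivisor with `π^p ∣ p`.  Then `A` is `p`-closed in `A[1/π]`
(i.e. `x ∈ A[1/π]` and `x^p ∈ A` imply `x ∈ A`) if and only if the Frobenius
`A/π → A/π^p`, `x ↦ x^p`, is injective (i.e. `x^p ≡ y^p mod π^p` implies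
`x ≡ y mod π`). -/
theorem statement11 (p : ℕ) [Fact p.Prime] {A : Type} [CommRing A] (π : A)
    (hπ : ∀ a : A, π * a = 0 → a = 0) (hdvd : π ^ p ∣ (p : A)) :
    (∀ x : Localization.Away π,
        x ^ p ∈ (algebraMap A (Localization.Away π)).range →
        x ∈ (algebraMap A (Localization.Away π)).range) ↔
      (∀ x y : A, x ^ p - y ^ p ∈ Ideal.span {π ^ p} → x - y ∈ Ideal.span {π}) := by
  simp only [Ideal.mem_span_singleton]
  have hπ' : π ∈ A⁰ := mem_nonZeroDivisors_iff_left.mpr hπ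
  rw [IsLocalization.Away.range_pow_closed_iff (S := Localization.Away π) hπ' p,
    frobenius_injective_iff_of_pow_dvd Fact.out hdvd]
end

section
/- Let R be a ring and r ∈ R a non-zerodivisor. If s ∈ R is a non-zerodivisor modulo r (i.e. s is a non-zerodivisor on R/rR), then the natural ring map R[X]/(rX − s) → R[s/r] ⊆ R[1/r] is an isomorphism. -/
/-!
If `p(s/r) = 0` and `N = natDegree p`, put `q = p.scaleRoots r`, so that `r^N p(X) = q(rX)` and
`q(s) = r^N p(s/r) = 0` in `R ⊆ R[1/r]`. Hence `rX - s` divides `q(rX) - q(s) = r^N p(X)`.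
It remains to cancel `r^N`, i.e. to see that `r` is a non-zerodivisor modulo `rX - s`:
if `r f = g (rX - s)`, comparing coefficients gives `s gₙ ≡ 0 mod r`, so `g = r g'` and
`f = g' (rX - s)`.
-/

open Polynomial nonZeroDivisors

namespace Polynomial

variable {R : Type*} [CommRing R]

theorem C_mul_X_sub_C_dvd_C_pow_mul_sub_C_eval_scaleRoots (p : R[X]) (r s : R) :
    C r * X - C s ∣ C r ^ p.natDegree * p - C ((p.scaleRoots r).eval s) := by
  have h := sub_dvd_eval_sub (C r * X) (C s) ((p.scaleRoots r).map C)
  rwa [eval_map, eval_map, eval₂_at_apply, scaleRoots_eval₂_mul, eval₂_C_X] at h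

theorem mem_span_C_mul_X_sub_C_of_C_mul_mem {r s : R} (hr : r ∈ R⁰)
    (hs : ∀ a : R, s * a ∈ Ideal.span {r} → a ∈ Ideal.span {r}) {f : R[X]}
    (hf : C r * f ∈ Ideal.span {C r * X - C s}) : f ∈ Ideal.span {C r * X - C s} := by
  obtain ⟨g, hg⟩ := Ideal.mem_span_singleton'.mp hf
  have hg_coeff : ∀ n, g.coeff n ∈ Ideal.span {r} := fun n ↦ by
    refine hs _ (Ideal.mem_span_singleton'.mpr ⟨(g * X).coeff n - f.coeff n, ?_⟩)
    have := congr_arg (coeff · n) (show C r * (g * X) - C s * g = C r * f by rw [← hg]; ring)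
    simp only [coeff_sub, coeff_C_mul] at this
    linear_combination this
  have hg_mem : g ∈ Ideal.span {C r} := by
    rw [← Set.image_singleton, ← Ideal.map_span]
    exact Ideal.mem_map_C_iff.mpr hg_coeff
  obtain ⟨g', rfl⟩ := Ideal.mem_span_singleton.mp hg_mem
  have hr' : C r ∈ R[X]⁰ := mem_nonzeroDivisors_of_coeff_mem 0 (by simpa using hr)
  rw [mul_assoc, mul_cancel_left_mem_nonZeroDivisors hr'] at hg
  exact Ideal.mem_span_singleton'.mpr ⟨g', hg⟩

theorem mem_span_C_mul_X_sub_C_of_C_pow_mul_mem {r s : R} (hr : r ∈ R⁰)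
    (hs : ∀ a : R, s * a ∈ Ideal.span {r} → a ∈ Ideal.span {r}) {f : R[X]} (n : ℕ)
    (hf : C r ^ n * f ∈ Ideal.span {C r * X - C s}) : f ∈ Ideal.span {C r * X - C s} := by
  induction n with
  | zero => simpa using hf
  | succ n ih =>
    exact ih (mem_span_C_mul_X_sub_C_of_C_mul_mem hr hs (by rwa [pow_succ', mul_assoc] at hf))

variable {A : Type*} [CommRing A] [Algebra R A]

theorem eval_scaleRoots_eq_zero_of_aeval_eq_zero (hinj : Function.Injective (algebraMap R A))
    {r s : R} {t : A} (hrt : algebraMap R A r * t = algebraMap R A s) {p : R[X]}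
    (hp : aeval t p = 0) : (p.scaleRoots r).eval s = 0 :=
  hinj <| by
    rw [map_zero, ← aeval_algebraMap_apply_eq_algebraMap_eval, ← hrt, scaleRoots_aeval_eq_zero hp]

theorem ker_aeval_eq_span_C_mul_X_sub_C (hinj : Function.Injective (algebraMap R A))
    {r s : R} (hr : r ∈ R⁰) (hs : ∀ a : R, s * a ∈ Ideal.span {r} → a ∈ Ideal.span {r})
    {t : A} (hrt : algebraMap R A r * t = algebraMap R A s) :
    RingHom.ker (aeval t : R[X] →ₐ[R] A) = Ideal.span {C r * X - C s} := by
  refine le_antisymm (fun p hp ↦ ?_) ?_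
  · have hdvd := C_mul_X_sub_C_dvd_C_pow_mul_sub_C_eval_scaleRoots p r s
    rw [eval_scaleRoots_eq_zero_of_aeval_eq_zero hinj hrt hp, map_zero, sub_zero] at hdvd
    exact mem_span_C_mul_X_sub_C_of_C_pow_mul_mem hr hs _ (Ideal.mem_span_singleton.mpr hdvd)
  · rw [Ideal.span_le, Set.singleton_subset_iff]
    simp [hrt]

end Polynomial

/-- **`R[X]/(rX − s) ≅ R[s/r]`.**
Let `r ∈ R` be a non-zerodivisor and `s ∈ R` a non-zerodivisor modulo `r`.  Let
`t = s/r ∈ R[1/r]` and consider the `R`-algebra map `R[X] → R[1/r]`, `X ↦ t`.  Its kernel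
is exactly the ideal `(rX − s)` and its range is the subalgebra `R[s/r]` generated by
`t`; that is, the natural map `R[X]/(rX − s) → R[s/r]` is an isomorphism. -/
theorem statement12 {R : Type} [CommRing R] (r s : R)
    (hr : ∀ a : R, r * a = 0 → a = 0)
    (hs : ∀ a : R, s * a ∈ Ideal.span {r} → a ∈ Ideal.span {r}) :
    RingHom.ker ((Polynomial.aeval
        (algebraMap R (Localization.Away r) s * IsLocalization.Away.invSelf r) :
          R[X] →ₐ[R] Localization.Away r)) =
      Ideal.span {Polynomial.C r * Polynomial.X - Polynomial.C s} ∧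
    (Polynomial.aeval
        (algebraMap R (Localization.Away r) s * IsLocalization.Away.invSelf r) :
          R[X] →ₐ[R] Localization.Away r).range =
      Algebra.adjoin R
        {algebraMap R (Localization.Away r) s * IsLocalization.Away.invSelf r} := by
  have hr' : r ∈ R⁰ := mem_nonZeroDivisors_iff_left.mpr hr
  have hinj : Function.Injective (algebraMap R (Localization.Away r)) :=
    IsLocalization.injective _ (Submonoid.powers_le.mpr hr')
  have hrt : algebraMap R (Localization.Away r) r *
      (algebraMap R (Localization.Away r) s * IsLocalization.Away.invSelf r) =
        algebraMap R (Localization.Away r) s := by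
    rw [mul_left_comm, IsLocalization.Away.mul_invSelf, mul_one]
  exact ⟨ker_aeval_eq_span_C_mul_X_sub_C hinj hr' hs hrt,
    (Algebra.adjoin_singleton_eq_range_aeval R _).symm⟩
end

section
/- Every perfectoid ring is reduced. Moreover, if A is perfectoid and a ∈ A admits a compatible system of p-power roots (a^{1/pⁿ}), then the a-power torsion A[a^∞] is annihilated by the ideal (a^{1/p^∞}) generated by all a^{1/pⁿ}. -/
/-!
Write `ξ = Γᵖ + p·u` with `Γ = [ξ₀^{1/p}]`, and suppose `yᵖ = ξ·z` in `W(R)`. The zeroth Witt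
components give `y₀ᵖ = ξ₀ z₀`, so `y = Γ·T + p·y₁` with `T = [z₀^{1/p}]`. Put
`g = T - Γ^{p-1} u⁻¹ y₁`; then `y ≡ Γ·g` modulo `ξ`. Since `y - Γ T = p·y₁` divides
`yᵖ - (Γ T)ᵖ = ξ z - [ξ₀ z₀]`, cancelling `p` (there is no `p`-torsion in `W(R)`) and reducing
modulo `ξ` shows `ξ ∣ gᵖ` again.
Iterating `p` times and using `Γᵖ = ξ - p·u` writes `y = ξ·b + p·g'` with `ξ ∣ g'ᵖ`, and
`p`-adic completeness of `W(R)` turns this into `ξ ∣ y`. So `(ξ)` is radical; the torsion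
statement is a formal consequence of reducedness.
-/

open Finset

theorem smodEq_span_singleton_pow_iff {W : Type*} [CommRing W] (ϖ x y : W) (n : ℕ) :
    x ≡ y [SMOD (Ideal.span {ϖ} ^ n • ⊤ : Submodule W W)] ↔ ϖ ^ n ∣ x - y := by
  simp [SModEq.sub_mem, Ideal.span_singleton_pow, Ideal.mem_span_singleton]

theorem IsAdicComplete.dvd_of_forall_mem_eq_mul_add_mul {W : Type*} [CommRing W] {ϖ ξ : W}
    [IsAdicComplete (Ideal.span {ϖ}) W] {S : Set W}
    (hS : ∀ G ∈ S, ∃ b, ∃ g ∈ S, G = ξ * b + ϖ * g) {G : W} (hG : G ∈ S) : ξ ∣ G := by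
  choose! b g hgS hbg using hS
  have hmem : ∀ n, g^[n] G ∈ S := by
    intro n
    induction n with
    | zero => exact hG
    | succ n ih => rw [Function.iterate_succ_apply']; exact hgS _ ih
  set T : ℕ → W := fun n ↦ ∑ i ∈ range n, ϖ ^ i * b (g^[i] G)
  have hT_succ : ∀ n, T (n + 1) = T n + ϖ ^ n * b (g^[n] G) := fun n ↦ sum_range_succ _ n
  have hG_eq : ∀ n, G = ξ * T n + ϖ ^ n * g^[n] G := by
    intro n
    induction n with
    | zero => simp [T]
    | succ n ih =>
      rw [hT_succ, Function.iterate_succ_apply']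
      linear_combination ih + ϖ ^ n * hbg _ (hmem n)
  have hT_cauchy : ∀ {m n}, m ≤ n → ϖ ^ m ∣ T n - T m := by
    intro m n hmn
    induction n, hmn using Nat.le_induction with
    | base => simp
    | succ n hmn ih =>
      rw [hT_succ, add_sub_right_comm]
      exact dvd_add ih (dvd_mul_of_dvd_left (pow_dvd_pow ϖ hmn) _)
  obtain ⟨L, hL⟩ := IsPrecomplete.prec inferInstance (f := T) fun hmn ↦
    (smodEq_span_singleton_pow_iff _ _ _ _).2 (dvd_sub_comm.1 (hT_cauchy hmn))
  refine ⟨L, sub_eq_zero.1 (IsHausdorff.haus (I := Ideal.span {ϖ}) inferInstance _ fun n ↦ ?_)⟩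
  rw [smodEq_span_singleton_pow_iff, sub_zero]
  obtain ⟨d, hd⟩ := (smodEq_span_singleton_pow_iff _ _ _ _).1 (hL n)
  exact ⟨ξ * d + g^[n] G, by linear_combination hG_eq n + ξ * hd⟩

theorem geom_sum₂_mul_mul {A : Type*} [CommSemiring A] (c x y : A) (n : ℕ) :
    ∑ i ∈ range n, (c * x) ^ i * (c * y) ^ (n - 1 - i) =
      c ^ (n - 1) * ∑ i ∈ range n, x ^ i * y ^ (n - 1 - i) := by
  rw [mul_sum]
  refine sum_congr rfl fun i hi ↦ ?_
  rw [mul_pow, mul_pow, ← Nat.add_sub_of_le (Nat.le_sub_one_of_lt (mem_range.1 hi)), pow_add]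
  simp only [Nat.add_sub_cancel_left]
  ring

theorem mul_geom_sum₂_mul_mul_of_pow_mul_eq {A : Type*} [CommRing A] {c e x y : A} {n : ℕ}
    (h : c ^ (n - 1) * e = x - y) :
    e * ∑ i ∈ range n, (c * x) ^ i * (c * y) ^ (n - 1 - i) = x ^ n - y ^ n := by
  rw [geom_sum₂_mul_mul, ← mul_assoc, mul_comm e, h, (Commute.all x y).mul_geom_sum₂]

namespace WittVector

variable {p : ℕ} [hp : Fact p.Prime] {R : Type*} [CommRing R] [CharP R p] [PerfectRing R p]

theorem exists_eq_teichmuller_add_p_mul (x : WittVector p R) :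
    ∃ x₁, x = teichmuller p (x.coeff 0) + p * x₁ := by
  have : x - teichmuller p (x.coeff 0) ∈ Ideal.span {(p : WittVector p R)} := by
    rw [mem_span_p_iff_coeff_zero_eq_zero, ← constantCoeff_apply, map_sub, constantCoeff_apply,
      constantCoeff_apply, teichmuller_coeff_zero, sub_self]
  obtain ⟨x₁, hx₁⟩ := Ideal.mem_span_singleton.1 this
  exact ⟨x₁, by linear_combination hx₁⟩

theorem coeff_zero_eq_of_pow_eq_mul {ξ u : WittVector p R} {ξ₀ : R}
    (hξ : ξ = teichmuller p ξ₀ + p * u) {y z : WittVector p R} (hz : y ^ p = ξ * z) :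
    y.coeff 0 =
      (_root_.frobeniusEquiv R p).symm ξ₀ * (_root_.frobeniusEquiv R p).symm (z.coeff 0) := by
  have h0 := congrArg constantCoeff hz
  rw [map_pow, map_mul, hξ, map_add, map_mul, map_natCast, CharP.cast_eq_zero, zero_mul,
    add_zero, constantCoeff_apply, constantCoeff_apply, constantCoeff_apply,
    teichmuller_coeff_zero] at h0
  refine injective_pow_p R p ?_
  rw [h0, mul_pow, frobeniusEquiv_symm_pow_p, frobeniusEquiv_symm_pow_p]

theorem exists_eq_mul_add_teichmuller_mul_of_dvd_pow {ξ u : WittVector p R} {ξ₀ : R}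
    (hu : IsUnit u) (hξ : ξ = teichmuller p ξ₀ + p * u) {y : WittVector p R} (hy : ξ ∣ y ^ p) :
    ∃ b g, y = ξ * b + teichmuller p ((_root_.frobeniusEquiv R p).symm ξ₀) * g ∧ ξ ∣ g ^ p := by
  obtain ⟨z, hz⟩ := hy
  obtain ⟨v, huv⟩ := hu.exists_right_inv
  obtain ⟨y₁, hy₁⟩ := exists_eq_teichmuller_add_p_mul y
  obtain ⟨z₁, hz₁⟩ := exists_eq_teichmuller_add_p_mul z
  set Γ := teichmuller p ((_root_.frobeniusEquiv R p).symm ξ₀)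
  set T := teichmuller p ((_root_.frobeniusEquiv R p).symm (z.coeff 0))
  have hΓ : Γ ^ p = teichmuller p ξ₀ := by rw [← map_pow, frobeniusEquiv_symm_pow_p]
  have hT : T ^ p = teichmuller p (z.coeff 0) := by rw [← map_pow, frobeniusEquiv_symm_pow_p]
  rw [coeff_zero_eq_of_pow_eq_mul hξ hz, map_mul] at hy₁
  have hΓp : Γ ^ p = Γ * Γ ^ (p - 1) := by rw [← pow_succ', Nat.sub_add_cancel hp.out.one_le]
  set g := T - Γ ^ (p - 1) * v * y₁
  have hy_eq : y = ξ * (v * y₁) + Γ * g := by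
    linear_combination hy₁ - v * y₁ * hξ + v * y₁ * hΓ - v * y₁ * hΓp - p * y₁ * huv
  refine ⟨v * y₁, g, hy_eq, ?_⟩
  set S := ∑ i ∈ range p, y ^ i * (Γ * T) ^ (p - 1 - i)
  have hS : y₁ * S = teichmuller p ξ₀ * z₁ + u * z := by
    rw [← sub_eq_zero]
    refine eq_zero_of_p_mul_eq_zero _ ?_
    linear_combination (geom_sum₂_mul y (Γ * T) p) - S * hy₁ + hz + z * hξ
      + teichmuller p ξ₀ * hz₁ - mul_pow Γ T p - T ^ p * hΓ - teichmuller p ξ₀ * hT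
  rw [← Ideal.mem_span_singleton, ← Ideal.Quotient.eq_zero_iff_mem]
  set π := Ideal.Quotient.mk (Ideal.span {ξ})
  have hπξ : π ξ = 0 := Ideal.Quotient.eq_zero_iff_mem.2 (Ideal.mem_span_singleton_self ξ)
  have hπy : π y = π Γ * π g := by rw [hy_eq, map_add, map_mul, hπξ, zero_mul, zero_add, map_mul]
  have hπS : -(π v * π y₁) * π S = π g ^ p - π T ^ p := by
    rw [RingHom.map_geom_sum₂, hπy, map_mul]
    exact mul_geom_sum₂_mul_mul_of_pow_mul_eq (by simp [g]; ring)
  have hπ := congrArg π hS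
  have hπξ' := congrArg π hξ
  have hπz := congrArg π hz₁
  have hπT := congrArg π hT
  have hπuv := congrArg π huv
  simp only [map_add, map_mul, map_pow, map_natCast, map_one] at hπ hπξ' hπz hπT hπuv ⊢
  -- modulo `ξ`: `gᵖ = Tᵖ - u⁻¹ y₁ S = [z₀] - u⁻¹ ([ξ₀] z₁ + u z) = [z₀] + p z₁ - z = 0`
  linear_combination -hπS - π v * hπ + π v * π z₁ * (hπξ' - hπξ) - π z * hπuv + p * π z₁ * hπuv
    - hπz + hπT

theorem exists_eq_mul_add_p_mul_of_dvd_pow {ξ u : WittVector p R} {ξ₀ : R} (hu : IsUnit u)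
    (hξ : ξ = teichmuller p ξ₀ + p * u) {y : WittVector p R} (hy : ξ ∣ y ^ p) :
    ∃ b g, ξ ∣ g ^ p ∧ y = ξ * b + p * g := by
  set π := teichmuller p ((_root_.frobeniusEquiv R p).symm ξ₀)
  have hπ_pow : ∀ k, ∃ b g, ξ ∣ g ^ p ∧ y = ξ * b + π ^ k * g := by
    intro k
    induction k with
    | zero => exact ⟨0, y, hy, by ring⟩
    | succ k ih =>
      obtain ⟨b, g, hg, hy_eq⟩ := ih
      obtain ⟨b', g', hg_eq, hg'⟩ := exists_eq_mul_add_teichmuller_mul_of_dvd_pow hu hξ hg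
      exact ⟨b + π ^ k * b', g', hg', by rw [hy_eq, hg_eq]; ring⟩
  obtain ⟨b, g, hg, hy_eq⟩ := hπ_pow p
  have hπp : π ^ p = ξ - p * u := by rw [← map_pow, frobeniusEquiv_symm_pow_p, hξ]; ring
  refine ⟨b + g, -(u * g), ?_, by rw [hy_eq, hπp]; ring⟩
  rw [← neg_mul, mul_pow]
  exact hg.mul_left _

theorem isReduced_quotient_span_of_eq_teichmuller_add_p_mul {ξ u : WittVector p R} {ξ₀ : R}
    (hu : IsUnit u) (hξ : ξ = teichmuller p ξ₀ + p * u) :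
    IsReduced (WittVector p R ⧸ Ideal.span {ξ}) := by
  rw [← Ideal.isRadical_iff_quotient_reduced, Ideal.isRadical_iff_pow_one_lt p hp.out.one_lt]
  simp only [Ideal.mem_span_singleton]
  exact fun y ↦ IsAdicComplete.dvd_of_forall_mem_eq_mul_add_mul (ϖ := (p : WittVector p R))
    (S := {g | ξ ∣ g ^ p}) (fun _ hG ↦ exists_eq_mul_add_p_mul_of_dvd_pow hu hξ hG)

end WittVector

theorem pow_pow_eq_of_pow_succ_eq {M : Type*} [Monoid M] {q : ℕ} {a : ℕ → M}
    (ha : ∀ n, a (n + 1) ^ q = a n) (k : ℕ) : a k ^ q ^ k = a 0 := by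
  induction k with
  | zero => simp
  | succ k ih => rw [pow_succ', pow_mul, ha, ih]

theorem mul_eq_zero_of_pow_pow_mul_eq_zero {A : Type*} [CommMonoidWithZero A] [IsReduced A]
    {r x : A} {m n : ℕ} (h : (r ^ m) ^ n * x = 0) : r * x = 0 :=
  IsReduced.eq_zero _ ⟨m * n + 1, by
    rw [pow_succ, mul_pow, calc r ^ (m * n) * x ^ (m * n) * (r * x)
        = (r ^ m) ^ n * x * (r * x ^ (m * n)) := by rw [← pow_mul]; ac_rfl, h, zero_mul]⟩

/-- **Perfectoid rings are reduced, and `a`-power torsion is almost zero.**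
A perfectoid ring `A = W(R)/(ξ)` (with `R` a perfect `𝔽_p`-algebra and `ξ` distinguished,
`ξ = [ξ₀] + p·u` with `u` a unit) is reduced.  Moreover if `a ∈ A` has a compatible
system of `p`-power roots `(a^{1/pⁿ})ₙ`, then the `a`-power torsion of `A` is annihilated
by every `a^{1/pᵏ}`. -/
theorem statement13 {p : ℕ} [Fact p.Prime] {R : Type} [CommRing R] [CharP R p]
    [PerfectRing R p] (ξ : WittVector p R) (ξ0 : R) (u : WittVector p R) (hu : IsUnit u)
    (hξ : ξ = WittVector.teichmuller p ξ0 + p * u) :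
    IsReduced (WittVector p R ⧸ Ideal.span {ξ}) ∧
    ∀ a : ℕ → WittVector p R ⧸ Ideal.span {ξ},
      (∀ n, (a (n + 1)) ^ p = a n) →
      ∀ x : WittVector p R ⧸ Ideal.span {ξ},
        (∃ n : ℕ, a 0 ^ n * x = 0) → ∀ k : ℕ, a k * x = 0 := by
  have hred := WittVector.isReduced_quotient_span_of_eq_teichmuller_add_p_mul hu hξ
  refine ⟨hred, fun a ha x ⟨n, hn⟩ k ↦ ?_⟩
  rw [← pow_pow_eq_of_pow_succ_eq ha k] at hn
  exact mul_eq_zero_of_pow_pow_mul_eq_zero hn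
end

section
/- Let A be a reduced ring and a ∈ A equipped with compatible p-power roots a^{1/pⁿ}. If x ∈ A satisfies aⁿx = 0 for some n ≥ 1, then a^{1/p^k}·x = 0 for every k ≥ 0. -/
/-- **In a reduced ring, `a`-power torsion is killed by all `p`-power roots of `a`.**
Let `A` be reduced and `a = r 0` be equipped with compatible `p`-power roots
(`r (n+1) ^ p = r n`).  If `aⁿ·x = 0` for some `n ≥ 1`, then `r k · x = 0` for all `k`. -/
theorem statement14 (p : ℕ) [Fact p.Prime] {A : Type} [CommRing A] [IsReduced A]
    (r : ℕ → A) (hr : ∀ n, (r (n + 1)) ^ p = r n)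
    (x : A) (n : ℕ) (hn : 1 ≤ n) (hx : r 0 ^ n * x = 0) :
    ∀ k : ℕ, r k * x = 0 := by
  intro k
  have hp : 1 ≤ p := (Fact.out : p.Prime).one_lt.le
  have hroot : ∀ k, r k ^ (p ^ k) = r 0 := by
    intro k
    induction k with
    | zero => simp
    | succ k ih =>
      rw [pow_succ, pow_mul, ← pow_mul, mul_comm, pow_mul, hr, ih]
  set m := p ^ k * n with hm
  have hm1 : 1 ≤ m := Nat.one_le_iff_ne_zero.mpr (by positivity)
  have hnil : (r k * x) ^ m = 0 := by
    have : (r k * x) ^ m = (r 0 ^ n * x) * x ^ (m - 1) := by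
      rw [mul_pow, hm, pow_mul, hroot k]
      have : x ^ (p ^ k * n) = x * x ^ (p ^ k * n - 1) := by
        conv_lhs => rw [← Nat.succ_pred_eq_of_pos (show 0 < p ^ k * n by positivity)]
        rw [pow_succ', Nat.pred_eq_sub_one]
      rw [this]; ring
    rw [this, hx, zero_mul]
  exact IsReduced.eq_zero _ ⟨m, hnil⟩
end

section
/- Let A be a ring with an element g admitting compatible p-power roots g^{1/pⁿ}, g ≠ 0. Let S ⊆ A^ℕ be the multiplicative set of sequences (g^{aₙ})ₙ with aₙ ∈ ℕ[1/p] and aₙ → 0, and for an A-module M set 𝒢(M) = S⁻¹(M^ℕ). If f : M → N is an almost isomorphism (kernel and cokernel killed by (g^{1/p^∞})), then the induced map 𝒢(M) → 𝒢(N) is an isomorphism. -/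
/-!
The sequence `g = (g^{1/pⁿ})ₙ` itself lies in `S`, since its exponents `1/pⁿ` tend to `0`.
Applied componentwise, the almost-isomorphism hypotheses say that this single element of `S`
kills the kernel and the cokernel of `f^ℕ : M^ℕ → N^ℕ`, and a map whose kernel and cokernel
are killed by an element of `S` becomes bijective after localizing at `S`.
-/

/-- The map `(ℕ → M) →ₗ[ℕ → A] (ℕ → N)` obtained by applying `f : M →ₗ[A] N`
componentwise. -/
def piMap {A : Type} [CommRing A] {M N : Type} [AddCommGroup M] [AddCommGroup N]
    [Module A M] [Module A N] (f : M →ₗ[A] N) : (ℕ → M) →ₗ[ℕ → A] (ℕ → N) where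
  toFun v := fun n => f (v n)
  map_add' v w := by funext n; simp
  map_smul' a v := by funext n; simp [Pi.smul_apply']

namespace LocalizedModule

variable {R M N : Type*} [CommSemiring R] [AddCommGroup M] [AddCommGroup N]
  [Module R M] [Module R N] {S : Submonoid R} (f : M →ₗ[R] N) (s : S)

theorem map_injective_of_smul_eq_zero_of_map_eq_zero (hker : ∀ x, f x = 0 → s • x = 0) :
    Function.Injective (map S f) := by
  rw [injective_iff_map_eq_zero]
  intro x hx
  induction x using induction_on with
  | h v t =>
    rw [map_mk, ← zero_mk t, mk_eq] at hx
    obtain ⟨u, hu⟩ := hx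
    rw [← LinearMap.map_smul_of_tower, ← LinearMap.map_smul_of_tower, smul_zero, smul_zero]
      at hu
    rw [← zero_mk t, mk_eq]
    exact ⟨s * u, by rw [smul_zero, smul_zero, mul_smul, hker _ hu]⟩

theorem map_surjective_of_smul_mem_range (hcoker : ∀ y, s • y ∈ LinearMap.range f) :
    Function.Surjective (map S f) := by
  intro y
  induction y using induction_on with
  | h w t =>
    obtain ⟨x, hx⟩ := hcoker w
    exact ⟨mk x (s * t), by rw [map_mk, hx, mk_cancel_common_left]⟩

end LocalizedModule

section piMap

variable {A : Type} [CommRing A] {M N : Type} [AddCommGroup M] [AddCommGroup N]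
  [Module A M] [Module A N] (f : M →ₗ[A] N) (g : ℕ → A)

theorem smul_eq_zero_of_piMap_eq_zero (hker : ∀ x : M, f x = 0 → ∀ k : ℕ, g k • x = 0)
    (v : ℕ → M) (hv : piMap f v = 0) : g • v = 0 :=
  funext fun n => hker (v n) (congrFun hv n) n

theorem smul_mem_range_piMap (hcoker : ∀ y : N, ∀ k : ℕ, ∃ x : M, g k • y = f x)
    (w : ℕ → N) : g • w ∈ LinearMap.range (piMap f) := by
  choose x hx using fun n => hcoker (w n) n
  exact ⟨x, funext fun n => (hx n).symm⟩

end piMap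

theorem statement19_general (p : ℕ) [Fact p.Prime] {A : Type} [CommRing A]
    (g : ℕ → A)
    (S : Submonoid (ℕ → A))
    (hS : (S : Set (ℕ → A)) = {s | ∃ m k : ℕ → ℕ,
      (∀ n, s n = g (k n) ^ m n) ∧
      Filter.Tendsto (fun n => (m n : ℝ) / (p : ℝ) ^ k n) Filter.atTop (nhds 0)})
    {M N : Type} [AddCommGroup M] [AddCommGroup N] [Module A M] [Module A N]
    (f : M →ₗ[A] N)
    (hker : ∀ x : M, f x = 0 → ∀ k : ℕ, g k • x = 0)
    (hcoker : ∀ y : N, ∀ k : ℕ, ∃ x : M, g k • y = f x) :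
    Function.Bijective (LocalizedModule.map S (piMap f)) := by
  have hp : (1 : ℝ) < p := by exact_mod_cast (Fact.out : p.Prime).one_lt
  have hgS : g ∈ S := by
    rw [← SetLike.mem_coe, hS]
    refine ⟨fun _ => 1, id, fun n => (pow_one _).symm, ?_⟩
    simpa [← one_div_pow] using
      tendsto_pow_atTop_nhds_zero_of_lt_one (by positivity) ((div_lt_one (by linarith)).2 hp)
  exact ⟨LocalizedModule.map_injective_of_smul_eq_zero_of_map_eq_zero _ ⟨g, hgS⟩
      (smul_eq_zero_of_piMap_eq_zero f g hker),
    LocalizedModule.map_surjective_of_smul_mem_range _ ⟨g, hgS⟩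
      (smul_mem_range_piMap f g hcoker)⟩

/-- **Gabber's construction turns almost isomorphisms into isomorphisms.**
Let `A` be a ring and `g = g 0 ≠ 0` an element with compatible `p`-power roots.  Let
`S ⊆ A^ℕ` be the multiplicative set of sequences `(g^{aₙ})ₙ` with `aₙ ∈ ℕ[1/p]` and
`aₙ → 0`, and for an `A`-module `M` set `𝒢(M) = S⁻¹(M^ℕ)`.  If `f : M → N` is an almost
isomorphism in the `g^{1/p^∞}` setting (kernel and cokernel killed by every `g^{1/pᵏ}`),
then the induced map `𝒢(M) → 𝒢(N)` is an isomorphism. -/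
theorem statement19 (p : ℕ) [Fact p.Prime] {A : Type} [CommRing A]
    (g : ℕ → A) (hg : ∀ n, (g (n + 1)) ^ p = g n) (hg0 : g 0 ≠ 0)
    (S : Submonoid (ℕ → A))
    (hS : (S : Set (ℕ → A)) = {s | ∃ m k : ℕ → ℕ,
      (∀ n, s n = g (k n) ^ m n) ∧
      Filter.Tendsto (fun n => (m n : ℝ) / (p : ℝ) ^ k n) Filter.atTop (nhds 0)})
    {M N : Type} [AddCommGroup M] [AddCommGroup N] [Module A M] [Module A N]
    (f : M →ₗ[A] N)
    (hker : ∀ x : M, f x = 0 → ∀ k : ℕ, g k • x = 0)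
    (hcoker : ∀ y : N, ∀ k : ℕ, ∃ x : M, g k • y = f x) :
    Function.Bijective (LocalizedModule.map S (piMap f)) :=
  statement19_general p g S hS f hker hcoker
end
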